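/- arXiv:2212.01616 — 7 statements merged into one kernel-verified Lean document; each statement's English description precedes it below -/
import Mathlib

section
/- Let G be a non-abelian finite simple group in which every maximal subgroup has even order. Then the non-generating graph of G is connected with diameter at most 3; that is, any two non-identity elements of G are joined in this graph by a path with at most 3 edges. -/
/-!
Every element `x` of a finite non-cyclic group lies in a maximal subgroup, which by hypothesis
contains an involution `t`, so `x — t` is an edge. Two involutions `t`, `s` generate a group in
which `⟨t * s⟩` is a normal cyclic subgroup (both `t` and `s` invert `t * s`), so they cannot
generate a non-abelian simple group and `t — s` is an edge too. Hence `x — t — s — y`.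
-/

/-- The non-generating graph of a group `G`: vertex set the non-identity elements,
with `x` and `y` adjacent iff `⟨x, y⟩` is a proper subgroup of `G`. -/
def nonGenGraph (G : Type*) [Group G] : SimpleGraph {g : G // g ≠ 1} :=
  SimpleGraph.fromRel (fun x y => Subgroup.closure ({(x : G), (y : G)} : Set G) ≠ ⊤)

open Subgroup

section

variable {G : Type*} [Group G]

lemma not_isCyclic_of_exists_mul_ne_mul (h : ∃ a b : G, a * b ≠ b * a) : ¬IsCyclic G := by
  intro _
  obtain ⟨a, b, hab⟩ := h
  exact hab (Std.Commutative.comm a b)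

lemma zpowers_ne_top_of_not_isCyclic (hG : ¬IsCyclic G) (g : G) : zpowers g ≠ ⊤ :=
  fun h => hG (isCyclic_iff_exists_zpowers_eq_top.2 ⟨g, h⟩)

lemma exists_isCoatom_mem_of_not_isCyclic [Finite G] (hG : ¬IsCyclic G) (g : G) :
    ∃ M : Subgroup G, IsCoatom M ∧ g ∈ M := by
  obtain h | ⟨M, hM, hle⟩ := eq_top_or_exists_le_coatom (zpowers g)
  · exact absurd h (zpowers_ne_top_of_not_isCyclic hG g)
  · exact ⟨M, hM, hle (mem_zpowers g)⟩

lemma closure_pair_ne_top_of_mem_isCoatom {M : Subgroup G} (hM : IsCoatom M) {a b : G}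
    (ha : a ∈ M) (hb : b ∈ M) : closure {a, b} ≠ ⊤ :=
  ne_top_of_le_ne_top hM.1 <|
    (closure_le M).2 (Set.insert_subset ha (Set.singleton_subset_iff.2 hb))

lemma Subgroup.exists_mem_ne_one_sq_eq_one_of_even_card [Finite G] {M : Subgroup G}
    (h : Even (Nat.card M)) : ∃ t ∈ M, t ≠ 1 ∧ t ^ 2 = 1 := by
  obtain ⟨t, ht⟩ := exists_prime_orderOf_dvd_card' 2 h.two_dvd
  rw [← orderOf_coe] at ht
  refine ⟨t, t.2, fun h1 => ?_, ht ▸ pow_orderOf_eq_one _⟩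
  rw [h1, orderOf_one] at ht
  exact absurd ht (by decide)

lemma inv_eq_self_of_sq_eq_one {t : G} (ht : t ^ 2 = 1) : t⁻¹ = t :=
  inv_eq_of_mul_eq_one_right (by rw [← sq, ht])

lemma mem_normalizer_zpowers_of_conj_eq_inv {g r : G} (h : g * r * g⁻¹ = r⁻¹) :
    g ∈ normalizer (zpowers r : Set G) := by
  rw [mem_normalizer_iff_map_conj_eq, MonoidHom.map_zpowers]
  exact (congrArg zpowers h).trans zpowers_inv

lemma closure_pair_le_normalizer_zpowers_mul {t s : G} (ht : t ^ 2 = 1) (hs : s ^ 2 = 1) :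
    closure {t, s} ≤ normalizer (zpowers (t * s) : Set G) := by
  refine (closure_le _).2 (Set.insert_subset ?_ (Set.singleton_subset_iff.2 ?_)) <;>
    refine mem_normalizer_zpowers_of_conj_eq_inv ?_ <;>
    rw [mul_inv_rev, inv_eq_self_of_sq_eq_one ht, inv_eq_self_of_sq_eq_one hs]
  · rw [← mul_assoc, ← sq, ht, one_mul]
  · rw [mul_assoc, mul_assoc, ← sq, hs, mul_one]

lemma IsSimpleGroup.closure_pair_ne_top_of_sq_eq_one [IsSimpleGroup G] (hG : ¬IsCyclic G)
    {t s : G} (ht : t ^ 2 = 1) (hs : s ^ 2 = 1) : closure {t, s} ≠ ⊤ := by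
  intro htop
  have hnormal : (zpowers (t * s)).Normal := normalizer_eq_top_iff.1 <|
    top_le_iff.1 (htop ▸ closure_pair_le_normalizer_zpowers_mul ht hs)
  obtain hbot | htop' := hnormal.eq_bot_or_eq_top
  · have hst : s = t := by
      rw [zpowers_eq_bot] at hbot
      rw [eq_inv_of_mul_eq_one_right hbot, inv_eq_self_of_sq_eq_one ht]
    rw [hst, Set.pair_eq_singleton, ← zpowers_eq_closure] at htop
    exact zpowers_ne_top_of_not_isCyclic hG t htop
  · exact zpowers_ne_top_of_not_isCyclic hG _ htop'

lemma nonGenGraph.exists_walk_length_le_one {a b : {g : G // g ≠ 1}}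
    (h : closure {(a : G), (b : G)} ≠ ⊤) : ∃ p : (nonGenGraph G).Walk a b, p.length ≤ 1 := by
  by_cases hab : a = b
  · subst hab
    exact ⟨.nil, zero_le_one⟩
  · exact ⟨.cons ⟨hab, Or.inl h⟩ .nil, le_rfl⟩

end

/-- If `G` is a non-abelian finite simple group all of whose maximal subgroups have
even order, then the non-generating graph of `G` is connected with diameter at most `3`. -/
theorem nongen_simple_even_maximals_diameter_le_three (G : Type*) [Group G] [Finite G]
    [IsSimpleGroup G] (hna : ∃ a b : G, a * b ≠ b * a)
    (hmax : ∀ M : Subgroup G, IsCoatom M → Even (Nat.card M))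
    (x y : {g : G // g ≠ 1}) :
    ∃ p : (nonGenGraph G).Walk x y, p.length ≤ 3 := by
  have hG := not_isCyclic_of_exists_mul_ne_mul hna
  obtain ⟨M, hM, hxM⟩ := exists_isCoatom_mem_of_not_isCyclic hG (x : G)
  obtain ⟨N, hN, hyN⟩ := exists_isCoatom_mem_of_not_isCyclic hG (y : G)
  obtain ⟨t, htM, ht1, ht⟩ := exists_mem_ne_one_sq_eq_one_of_even_card (hmax M hM)
  obtain ⟨s, hsN, hs1, hs⟩ := exists_mem_ne_one_sq_eq_one_of_even_card (hmax N hN)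
  obtain ⟨p₁, hp₁⟩ := nonGenGraph.exists_walk_length_le_one (b := ⟨t, ht1⟩)
    (closure_pair_ne_top_of_mem_isCoatom hM hxM htM)
  obtain ⟨p₂, hp₂⟩ := nonGenGraph.exists_walk_length_le_one (a := ⟨t, ht1⟩) (b := ⟨s, hs1⟩)
    (IsSimpleGroup.closure_pair_ne_top_of_sq_eq_one hG ht hs)
  obtain ⟨p₃, hp₃⟩ := nonGenGraph.exists_walk_length_le_one (a := ⟨s, hs1⟩)
    (closure_pair_ne_top_of_mem_isCoatom hN hsN hyN)
  refine ⟨(p₁.append p₂).append p₃, ?_⟩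
  simp only [SimpleGraph.Walk.length_append]
  omega
end

section
/- Let G be a non-abelian finite simple group, let L and M be maximal subgroups of G with L of even order, and suppose that L ∩ M is contained in Z(M) and that L ∩ M contains an involution f. Let u ∈ L with u ∉ M. Then there exists an involution f' ∈ L with f' ∉ M and uf' ≠ f'u. -/
/-- The centre `Z(H)` of a subgroup `H` of `G`, as a subset of `G`. -/
def subCenter {G : Type*} [Group G] (H : Subgroup G) : Set G :=
  {x | x ∈ H ∧ ∀ m ∈ H, x * m = m * x}

/-!
Conjugate the given involution: `f' = u f u⁻¹` is an involution of `L`. A nontrivial element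
central in a maximal, non-normal subgroup `M` of a simple group has centralizer exactly `M`.
So if `f'` were in `M`, it would lie in `Z(M)` as `f` does, and `u` would carry
`C(f) = M` onto `C(f') = M`, putting `u` in `N_G(M) = M`. Finally `u` commuting with `f'`
would force `f' = f ∈ M`.
-/

namespace Subgroup

variable {G : Type*} [Group G]

theorem normal_of_center_eq_top (H : Subgroup G) (h : center G = ⊤) : H.Normal :=
  ⟨fun n hn g => by
    rw [(mem_center_iff.mp (h ▸ mem_top g) n).symm, mul_inv_cancel_right]
    exact hn⟩

theorem not_normal_of_isCoatom [IsSimpleGroup G] {M : Subgroup G} (hM : IsCoatom M)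
    (hM₀ : M ≠ ⊥) : ¬M.Normal :=
  fun hMn => hMn.eq_bot_or_eq_top.elim hM₀ hM.1

theorem normalizer_eq_self_of_isCoatom {M : Subgroup G} (hM : IsCoatom M) (hMn : ¬M.Normal) :
    normalizer (M : Set G) = M :=
  (eq_or_lt_of_le le_normalizer).elim Eq.symm fun hlt =>
    absurd (normalizer_eq_top_iff.mp (hM.2 _ hlt)) hMn

theorem centralizer_singleton_eq_of_isCoatom [IsSimpleGroup G] {M : Subgroup G}
    (hM : IsCoatom M) (hMn : ¬M.Normal) {x : G} (hx : x ≠ 1) (hxM : ∀ m ∈ M, x * m = m * x) :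
    centralizer {x} = M := by
  have hle : M ≤ centralizer {x} := fun m hm =>
    mem_centralizer_singleton_iff.mpr (hxM m hm).symm
  have hx_not_center : x ∉ center G := by
    intro hxZ
    rcases (inferInstance : (center G).Normal).eq_bot_or_eq_top with hZ | hZ
    · exact hx (mem_bot.mp (hZ ▸ hxZ))
    · exact hMn (M.normal_of_center_eq_top hZ)
  have hne : centralizer {x} ≠ ⊤ := fun htop =>
    hx_not_center (mem_center_iff.mpr fun g =>
      mem_centralizer_singleton_iff.mp (htop ▸ mem_top g))
  exact ((eq_or_lt_of_le hle).resolve_right fun hlt => hne (hM.2 _ hlt)).symm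

theorem mem_normalizer_of_centralizer_conj_eq {H : Subgroup G} {x g : G}
    (hx : centralizer {x} = H) (hgx : centralizer {g * x * g⁻¹} = H) :
    g ∈ normalizer (H : Set G) :=
  mem_normalizer_iff.mpr fun h => by
    subst hx
    conv_rhs => rw [← hgx]
    simp only [mem_centralizer_singleton_iff, ← commute_iff_eq, Commute.conj_iff]

end Subgroup

theorem involution_noncommuting_outside_M_general (G : Type*) [Group G]
    [IsSimpleGroup G]
    (L M : Subgroup G)
    (hM : IsCoatom M)
    (hLM : ∀ g : G, g ∈ L → g ∈ M → g ∈ subCenter M)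
    (f : G) (hf : orderOf f = 2) (hfL : f ∈ L) (hfM : f ∈ M)
    (u : G) (huL : u ∈ L) (huM : u ∉ M) :
    ∃ f' : G, orderOf f' = 2 ∧ f' ∈ L ∧ f' ∉ M ∧ u * f' ≠ f' * u := by
  have hf₁ : f ≠ 1 := by rintro rfl; simp at hf
  have hMn : ¬M.Normal :=
    Subgroup.not_normal_of_isCoatom hM fun h => hf₁ (Subgroup.mem_bot.mp (h ▸ hfM))
  have hconj : SemiconjBy u f (u * f * u⁻¹) := by simp [SemiconjBy]
  have hf'₁ : u * f * u⁻¹ ≠ 1 := by simpa using hf₁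
  have hf'L : u * f * u⁻¹ ∈ L := L.mul_mem (L.mul_mem huL hfL) (L.inv_mem huL)
  have hf'M : u * f * u⁻¹ ∉ M := fun hf'M => by
    have hCf := Subgroup.centralizer_singleton_eq_of_isCoatom hM hMn hf₁ (hLM f hfL hfM).2
    have hCf' := Subgroup.centralizer_singleton_eq_of_isCoatom hM hMn hf'₁ (hLM _ hf'L hf'M).2
    exact huM (Subgroup.normalizer_eq_self_of_isCoatom hM hMn ▸
      Subgroup.mem_normalizer_of_centralizer_conj_eq hCf hCf')
  refine ⟨u * f * u⁻¹, hf ▸ (hconj.orderOf_eq).symm, hf'L, hf'M, fun hcomm => hf'M ?_⟩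
  have hff' : u * f * u⁻¹ = f := mul_left_cancel (hcomm.trans hconj.symm)
  rwa [hff']

/-- Let `G` be a non-abelian finite simple group, `L` a maximal subgroup of even
order and `M` a maximal subgroup with `L ∩ M ⊆ Z(M)`, such that `L ∩ M` contains an
involution.  Then for every `u ∈ L \ M` there is an involution `f' ∈ L \ M` not
commuting with `u`. -/
theorem involution_noncommuting_outside_M (G : Type*) [Group G] [Finite G]
    [IsSimpleGroup G] (hna : ∃ a b : G, a * b ≠ b * a)
    (L M : Subgroup G) (hL : IsCoatom L) (hLeven : Even (Nat.card L))
    (hM : IsCoatom M)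
    (hLM : ∀ g : G, g ∈ L → g ∈ M → g ∈ subCenter M)
    (f : G) (hf : orderOf f = 2) (hfL : f ∈ L) (hfM : f ∈ M)
    (u : G) (huL : u ∈ L) (huM : u ∉ M) :
    ∃ f' : G, orderOf f' = 2 ∧ f' ∈ L ∧ f' ∉ M ∧ u * f' ≠ f' * u :=
  involution_noncommuting_outside_M_general G L M hM hLM f hf hfL hfM u huL huM
end

section
/- Let n ≥ 5 and let x, y be non-identity elements of the alternating group A_n. Then, in the non-commuting, non-generating graph nc(A_n): (a) d(x,y) ≤ 4; (b) if neither x nor y is a derangement, then d(x,y) ≤ 2; (c) if at least one of x and y is not a derangement, then d(x,y) ≤ 3. -/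
/-!
If `x ≠ 1` fixes `i` and `y ≠ 1` fixes `j`, they have a common neighbour `z`: an element
commuting with neither and sharing a point stabilizer (a proper subgroup) with each of them.
If `a` and `b` in a subgroup fail to commute with `x` and `y` respectively, one of `a`, `b`,
`ab` commutes with neither, so `z` can be taken in the two-point stabilizer `(Aₙ)ᵢⱼ` unless
`x` (or `y`) centralizes it; then `x` also fixes `j`, because `i` and `j` are the only fixed
points of `(Aₙ)ᵢⱼ`, and `z` is taken in `(Aₙ)ⱼ`.

A derangement `y` is adjacent to an element with a fixed point. If `y` is not an `n`-cycle it
preserves a proper nonempty union of its cycles, whose setwise stabilizer contains a double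
transposition with a fixed point not commuting with `y`. If `y` is an `n`-cycle, then `n` is
odd, so `y` is conjugate to `y²` in `Sₙ`, and the square of the conjugator, corrected by a
power of `y`, is an even permutation with a fixed point conjugating `y` to `y⁴ ≠ y`; it lies in
the normalizer of `⟨y⟩`, which is proper because `Aₙ` is simple and not cyclic.
Concatenating these walks gives the bounds 3 and 4.
-/

/-- The non-commuting, non-generating graph of a group `G`. -/
def ncGraph (G : Type*) [Group G] : SimpleGraph G :=
  SimpleGraph.fromRel (fun x y => x * y ≠ y * x ∧ Subgroup.closure ({x, y} : Set G) ≠ ⊤)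

open Equiv Equiv.Perm MulAction
open scoped Pointwise

section ncGraph

variable {G : Type*} [Group G]

theorem ncGraph_adj_of_mem {H : Subgroup G} (hH : H ≠ ⊤) {x y : G} (hx : x ∈ H) (hy : y ∈ H)
    (hxy : ¬Commute x y) : (ncGraph G).Adj x y := by
  have hclosure : Subgroup.closure ({x, y} : Set G) ≠ ⊤ := fun h =>
    hH (top_le_iff.1 (h ▸ (Subgroup.closure_le H).2
      (Set.insert_subset hx (Set.singleton_subset_iff.2 hy))))
  rw [ncGraph, SimpleGraph.fromRel_adj]
  exact ⟨fun h => hxy (h ▸ Commute.refl x), Or.inl ⟨hxy, hclosure⟩⟩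

theorem ne_one_of_ncGraph_adj {x y : G} (h : (ncGraph G).Adj x y) : y ≠ 1 := by
  rintro rfl
  simp [ncGraph] at h

theorem exists_mem_not_commute_of_not_commute {H : Subgroup G} {x y a b : G} (ha : a ∈ H)
    (hb : b ∈ H) (hax : ¬Commute a x) (hby : ¬Commute b y) :
    ∃ z ∈ H, ¬Commute z x ∧ ¬Commute z y := by
  by_cases hay : Commute a y
  · by_cases hbx : Commute b x
    · refine ⟨a * b, H.mul_mem ha hb, fun h => hax ?_, fun h => hby ?_⟩
      · simpa using h.mul_left hbx.inv_left
      · simpa using hay.inv_left.mul_left h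
    · exact ⟨b, hb, hbx, hby⟩
  · exact ⟨a, ha, hax, hay⟩

end ncGraph

theorem Finset.exists_notMem_of_card_lt_natCard {α : Type*} [Fintype α] {s : Finset α}
    (h : s.card < Nat.card α) : ∃ a, a ∉ s := by
  rw [Nat.card_eq_fintype_card, ← Finset.card_univ] at h
  obtain ⟨a, -, ha⟩ := Finset.exists_mem_notMem_of_card_lt_card h
  exact ⟨a, ha⟩

namespace Equiv.Perm

variable {α : Type*} [Fintype α] [DecidableEq α]

theorem exists_mem_alternatingGroup_fixing_apply_ne (h5 : 5 ≤ Nat.card α) {i j t : α}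
    (hti : t ≠ i) (htj : t ≠ j) :
    ∃ z ∈ alternatingGroup α, z i = i ∧ z j = j ∧ z t ≠ t := by
  obtain ⟨u, hu⟩ := Finset.exists_notMem_of_card_lt_natCard (s := {i, j, t})
    (Finset.card_le_three.trans_lt (by omega))
  obtain ⟨v, hv⟩ := Finset.exists_notMem_of_card_lt_natCard (s := {i, j, t, u})
    (Finset.card_le_four.trans_lt (by omega))
  simp only [Finset.mem_insert, Finset.mem_singleton, not_or] at hu hv
  refine ⟨swap t u * swap t v, ?_, ?_, ?_, ?_⟩
  · simp [mem_alternatingGroup, sign_swap (Ne.symm hu.2.2), sign_swap (Ne.symm hv.2.2.1)]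
  · rw [Perm.mul_apply, swap_apply_of_ne_of_ne hti.symm (Ne.symm hv.1),
      swap_apply_of_ne_of_ne hti.symm (Ne.symm hu.1)]
  · rw [Perm.mul_apply, swap_apply_of_ne_of_ne htj.symm (Ne.symm hv.2.1),
      swap_apply_of_ne_of_ne htj.symm (Ne.symm hu.2.1)]
  · simp [swap_apply_of_ne_of_ne, hv.2.2.1, hv.2.2.2]

theorem apply_eq_self_of_forall_commute (h5 : 5 ≤ Nat.card α) {x : Perm α} {i j : α}
    (hxi : x i = i) (hx : ∀ z ∈ alternatingGroup α, z i = i → z j = j → Commute z x) :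
    x j = j := by
  by_contra hxj
  have hxji : x j ≠ i := fun h => hxj (by rw [x.injective (h.trans hxi.symm), hxi])
  obtain ⟨z, hz, hzi, hzj, hzx⟩ := exists_mem_alternatingGroup_fixing_apply_ne h5 hxji hxj
  exact hzx (by rw [← Perm.mul_apply, (hx z hz hzi hzj).eq, Perm.mul_apply, hzj])

theorem IsCycle.exists_conj_eq_pow_four {c : Perm α} (hc : c.IsCycle)
    (hs : c.support = Finset.univ) (hsign : Perm.sign c = 1) (a : α) :
    ∃ ρ : Perm α, Perm.sign ρ = 1 ∧ ρ a = a ∧ ρ * c * ρ⁻¹ = c ^ 4 := by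
  have hodd : Odd (Fintype.card α) := by
    rcases Nat.even_or_odd (Fintype.card α) with he | ho
    · rw [hc.sign, hs, Finset.card_univ, he.neg_one_pow] at hsign
      exact absurd hsign (by decide)
    · exact ho
  have hcop : Nat.Coprime 2 (orderOf c) := by
    rw [hc.orderOf, hs, Finset.card_univ]
    exact Nat.coprime_two_left.2 hodd
  obtain ⟨σ, hσ⟩ := _root_.isConj_iff.1
    (hc.isConj (hc.pow_iff.2 hcop) (by rw [support_pow_coprime hcop]))
  have hmoves (t : α) : c t ≠ t := mem_support.1 (hs ▸ Finset.mem_univ t)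
  obtain ⟨k, hk⟩ := hc.sameCycle (hmoves a) (hmoves ((σ ^ 2)⁻¹ a))
  refine ⟨σ ^ 2 * c ^ k, ?_, ?_, ?_⟩
  · simp [hsign]
  · simp [hk]
  · calc σ ^ 2 * c ^ k * c * (σ ^ 2 * c ^ k)⁻¹ = σ * (σ * c * σ⁻¹) * σ⁻¹ := by
          rw [sq]; group
      _ = c ^ 4 := by rw [hσ, ← conj_pow, hσ, ← pow_mul]

end Equiv.Perm

namespace alternatingGroup

variable {α : Type*} [Fintype α] [DecidableEq α]

local notation "A" => alternatingGroup α

theorem stabilizer_point_ne_top (h3 : 3 ≤ Nat.card α) (i : α) : stabilizer A i ≠ ⊤ := by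
  obtain ⟨u, hu⟩ := Finset.exists_notMem_of_card_lt_natCard (s := {i})
    ((Finset.card_singleton i).trans_lt (by omega))
  obtain ⟨v, hv⟩ := Finset.exists_notMem_of_card_lt_natCard (s := {i, u})
    (Finset.card_le_two.trans_lt (by omega))
  simp only [Finset.mem_insert, Finset.mem_singleton, not_or] at hu hv
  rw [← stabilizer_singleton]
  exact stabilizer_ne_top (Set.singleton_nonempty i) ⟨u, hu, v, hv.1, Ne.symm hv.2⟩

theorem mem_stabilizer_of_forall_commute (h5 : 5 ≤ Nat.card α) {x : A} {i j : α}
    (hxi : x ∈ stabilizer A i) (hx : ∀ a ∈ stabilizer A i ⊓ stabilizer A j, Commute a x) :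
    x ∈ stabilizer A j :=
  apply_eq_self_of_forall_commute h5 hxi fun z hz hzi hzj =>
    (hx ⟨z, hz⟩ ⟨hzi, hzj⟩).map (alternatingGroup α).subtype

theorem exists_mem_stabilizer_not_commute (h5 : 5 ≤ Nat.card α) {x : A} (hx : x ≠ 1) {i : α}
    (hxi : x ∈ stabilizer A i) : ∃ a ∈ stabilizer A i, ¬Commute a x := by
  by_contra! h
  exact hx (Subtype.ext (Equiv.ext fun t =>
    mem_stabilizer_of_forall_commute h5 hxi fun a ha => h a (Subgroup.mem_inf.1 ha).1))

theorem exists_ncGraph_common_neighbor (h5 : 5 ≤ Nat.card α) {x y : A} (hx : x ≠ 1)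
    (hy : y ≠ 1) {i j : α} (hxi : x ∈ stabilizer A i) (hyj : y ∈ stabilizer A j) :
    ∃ z, (ncGraph A).Adj x z ∧ (ncGraph A).Adj z y := by
  have adj {k : α} {g h : A} (hg : g ∈ stabilizer A k) (hh : h ∈ stabilizer A k)
      (hgh : ¬Commute g h) : (ncGraph A).Adj g h :=
    ncGraph_adj_of_mem (stabilizer_point_ne_top (by omega) k) hg hh hgh
  have common {k : α} (hxk : x ∈ stabilizer A k) (hyk : y ∈ stabilizer A k) :
      ∃ z, (ncGraph A).Adj x z ∧ (ncGraph A).Adj z y := by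
    obtain ⟨a, ha, hax⟩ := exists_mem_stabilizer_not_commute h5 hx hxk
    obtain ⟨b, hb, hby⟩ := exists_mem_stabilizer_not_commute h5 hy hyk
    obtain ⟨z, hz, hzx, hzy⟩ := exists_mem_not_commute_of_not_commute ha hb hax hby
    exact ⟨z, adj hxk hz (mt Commute.symm hzx), adj hz hyk hzy⟩
  by_cases hxc : ∀ a ∈ stabilizer A i ⊓ stabilizer A j, Commute a x
  · exact common (mem_stabilizer_of_forall_commute h5 hxi hxc) hyj
  by_cases hyc : ∀ b ∈ stabilizer A j ⊓ stabilizer A i, Commute b y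
  · exact common hxi (mem_stabilizer_of_forall_commute h5 hyj hyc)
  push Not at hxc hyc
  obtain ⟨a, ha, hax⟩ := hxc
  obtain ⟨b, hb, hby⟩ := hyc
  rw [inf_comm] at hb
  obtain ⟨z, hz, hzx, hzy⟩ := exists_mem_not_commute_of_not_commute ha hb hax hby
  exact ⟨z, adj hxi hz.1 (mt Commute.symm hzx), adj hz.2 hyj hzy⟩

theorem exists_ncGraph_adj_fixedPt_of_mem_stabilizer (h5 : 5 ≤ Nat.card α) {y : A}
    {O : Set α} (hyO : y ∈ stabilizer A O) {a b c : α} (ha : a ∈ O)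
    (hya : (y : Perm α) a ≠ a) (hb : b ∉ O) (hyb : (y : Perm α) b ≠ b) (hc : c ∉ O) (hcb : c ≠ b)
    (hcyb : c ≠ (y : Perm α) b) :
    ∃ y' : A, (ncGraph A).Adj y y' ∧ ∃ i, (y' : Perm α) i = i := by
  have hyO' : ∀ t, (y : Perm α) t ∈ O ↔ t ∈ O := mem_stabilizer_set.1 hyO
  have hyaO : (y : Perm α) a ∈ O := (hyO' a).2 ha
  have hybO : (y : Perm α) b ∉ O := fun h => hb ((hyO' b).1 h)
  set z := swap a ((y : Perm α) a) * swap b c with hz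
  have hzA : z ∈ A := by
    simp [hz, mem_alternatingGroup, sign_swap (Ne.symm hya), sign_swap (Ne.symm hcb)]
  have hzO : z ∈ stabilizer (Perm α) O := mul_mem
    (swap_mem_stabilizer.2 (iff_of_true ha hyaO)) (swap_mem_stabilizer.2 (iff_of_false hb hc))
  obtain ⟨d, hd⟩ := Finset.exists_notMem_of_card_lt_natCard (s := {a, (y : Perm α) a, b, c})
    (Finset.card_le_four.trans_lt (by omega))
  simp only [Finset.mem_insert, Finset.mem_singleton, not_or] at hd
  have hOA : stabilizer A O ≠ ⊤ := stabilizer_ne_top ⟨a, ha⟩ ⟨b, hb, c, hc, hcb.symm⟩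
  refine ⟨⟨z, hzA⟩, ncGraph_adj_of_mem hOA hyO
    (mem_stabilizer_set.2 fun t => mem_stabilizer_set.1 hzO t) fun h => ?_, d, ?_⟩
  · have hcomm := congrArg (· b) ((h.map (alternatingGroup α).subtype).eq)
    have hzb : z b = c := by
      simp [hz, swap_apply_of_ne_of_ne (ne_of_mem_of_not_mem ha hc).symm
        (ne_of_mem_of_not_mem hyaO hc).symm]
    have hzyb : z ((y : Perm α) b) = (y : Perm α) b := by
      simp [hz, swap_apply_of_ne_of_ne hyb hcyb.symm, swap_apply_of_ne_of_ne
        (ne_of_mem_of_not_mem ha hybO).symm (ne_of_mem_of_not_mem hyaO hybO).symm]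
    simp only [Subgroup.subtype_apply, Perm.mul_apply, hzb, hzyb] at hcomm
    exact hcb ((y : Perm α).injective hcomm)
  · simp [hz, swap_apply_of_ne_of_ne, hd.1, hd.2.1, hd.2.2.1, hd.2.2.2]

theorem exists_ncGraph_adj_fixedPt_of_isCycle (h5 : 5 ≤ Nat.card α) {y : A}
    (hc : (y : Perm α).IsCycle) (hs : (y : Perm α).support = Finset.univ) :
    ∃ y' : A, (ncGraph A).Adj y y' ∧ ∃ i, (y' : Perm α) i = i := by
  obtain ⟨a⟩ : Nonempty α := (Nat.card_pos_iff.1 (by omega)).1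
  obtain ⟨ρ, hρA, hρa, hρy⟩ := hc.exists_conj_eq_pow_four hs (mem_alternatingGroup.1 y.2) a
  set r : A := ⟨ρ, mem_alternatingGroup.2 hρA⟩
  have hr : r * y * r⁻¹ = y ^ 4 := Subtype.ext hρy
  have hry : ¬Commute r y := by
    intro h
    rw [h.eq, mul_inv_cancel_right, pow_succ, right_eq_mul] at hr
    have h3 := orderOf_dvd_of_pow_eq_one hr
    rw [← Subgroup.orderOf_coe, hc.orderOf, hs, Finset.card_univ,
      ← Nat.card_eq_fintype_card] at h3
    have := Nat.le_of_dvd (by norm_num) h3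
    omega
  have hrN : r ∈ Subgroup.normalizer (Subgroup.zpowers y : Set A) := by
    refine Subgroup.mem_normalizer_fintype fun m hm => ?_
    obtain ⟨k, rfl⟩ := Subgroup.mem_zpowers_iff.1 hm
    rw [← conj_zpow, hr, ← zpow_natCast, ← zpow_mul]
    exact Subgroup.zpow_mem_zpowers y _
  have hN : Subgroup.normalizer (Subgroup.zpowers y : Set A) ≠ ⊤ := by
    intro htop
    have : (Subgroup.zpowers y).Normal := Subgroup.normalizer_eq_top_iff.1 htop
    rcases normal_subgroup_eq_bot_or_eq_top h5 (N := Subgroup.zpowers y) with hbot | htop'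
    · exact hc.ne_one (by rw [Subgroup.zpowers_eq_bot.1 hbot]; rfl)
    · obtain ⟨k, hk⟩ := Subgroup.mem_zpowers_iff.1 (htop' ▸ Subgroup.mem_top r)
      exact hry (hk ▸ (Commute.refl y).zpow_left k)
  exact ⟨r, ncGraph_adj_of_mem hN (Subgroup.le_normalizer (Subgroup.mem_zpowers y)) hrN
    (mt Commute.symm hry), a, hρa⟩

theorem exists_ncGraph_adj_fixedPt_of_forall_apply_ne (h5 : 5 ≤ Nat.card α) {y : A}
    (hy : ∀ i, (y : Perm α) i ≠ i) :
    ∃ y' : A, (ncGraph A).Adj y y' ∧ ∃ i, (y' : Perm α) i = i := by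
  obtain ⟨a⟩ : Nonempty α := (Nat.card_pos_iff.1 (by omega)).1
  set O : Set α := {t | (y : Perm α).SameCycle a t}
  have haO : a ∈ O := SameCycle.refl _ _
  have hyO : y ∈ stabilizer A O := mem_stabilizer_set.2 fun _ => sameCycle_apply_right
  by_cases hcyc : ∀ t, t ∈ O
  · exact exists_ncGraph_adj_fixedPt_of_isCycle h5 ⟨a, hy a, fun t _ => hcyc t⟩
      (Finset.eq_univ_of_forall fun t => mem_support.2 (hy t))
  push Not at hcyc
  obtain ⟨b, hb⟩ := hcyc
  by_cases hc : ∃ c ∉ O, c ≠ b ∧ c ≠ (y : Perm α) b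
  · obtain ⟨c, hc, hcb, hcyb⟩ := hc
    exact exists_ncGraph_adj_fixedPt_of_mem_stabilizer h5 hyO haO (hy a) hb (hy b) hc hcb hcyb
  -- The complement of the cycle of `a` is then the 2-cycle of `b`: exchange their roles.
  push Not at hc
  obtain ⟨d, hd⟩ := Finset.exists_notMem_of_card_lt_natCard
    (s := {a, (y : Perm α) a, b, (y : Perm α) b}) (Finset.card_le_four.trans_lt (by omega))
  simp only [Finset.mem_insert, Finset.mem_singleton, not_or] at hd
  have hdO : d ∈ O := by
    by_contra hdO
    exact hd.2.2.2 (hc d hdO hd.2.2.1)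
  exact exists_ncGraph_adj_fixedPt_of_mem_stabilizer h5 (by rwa [stabilizer_compl])
    (a := b) (b := a) hb (hy b) (not_not.2 haO) (hy a) (not_not.2 hdO) hd.1 hd.2.1

theorem exists_ncGraph_walk_length_le_one_fixedPt (h5 : 5 ≤ Nat.card α) {x : A} (hx : x ≠ 1) :
    ∃ x' : A, x' ≠ 1 ∧ (∃ i, (x' : Perm α) i = i) ∧
      ∃ p : (ncGraph A).Walk x x', p.length ≤ 1 := by
  by_cases hfix : ∃ i, (x : Perm α) i = i
  · exact ⟨x, hx, hfix, .nil, zero_le_one⟩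
  push Not at hfix
  obtain ⟨x', hadj, hx'⟩ := exists_ncGraph_adj_fixedPt_of_forall_apply_ne h5 hfix
  exact ⟨x', ne_one_of_ncGraph_adj hadj, hx', hadj.toWalk, le_rfl⟩

theorem exists_ncGraph_walk_length_le_two (h5 : 5 ≤ Nat.card α) {x y : A} (hx : x ≠ 1)
    (hy : y ≠ 1) (hxi : ∃ i, (x : Perm α) i = i) (hyj : ∃ j, (y : Perm α) j = j) :
    ∃ p : (ncGraph A).Walk x y, p.length ≤ 2 := by
  obtain ⟨i, hxi⟩ := hxi
  obtain ⟨j, hyj⟩ := hyj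
  obtain ⟨z, hxz, hzy⟩ := exists_ncGraph_common_neighbor h5 hx hy (i := i) (j := j) hxi hyj
  exact ⟨.cons hxz hzy.toWalk, le_rfl⟩

end alternatingGroup

open alternatingGroup

/-- Let `n ≥ 5` and let `x, y` be non-identity elements of `Aₙ`.  Then in `nc(Aₙ)`:
`d(x,y) ≤ 4`; if neither `x` nor `y` is a derangement then `d(x,y) ≤ 2`; and if at
least one of them is not a derangement then `d(x,y) ≤ 3`. -/
theorem nc_alternating_distance_bounds (n : ℕ) (hn : 5 ≤ n)
    (x y : alternatingGroup (Fin n)) (hx : x ≠ 1) (hy : y ≠ 1) :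
    (∃ p : (ncGraph (alternatingGroup (Fin n))).Walk x y, p.length ≤ 4) ∧
    ((∃ i : Fin n, (x : Equiv.Perm (Fin n)) i = i) →
      (∃ i : Fin n, (y : Equiv.Perm (Fin n)) i = i) →
      ∃ p : (ncGraph (alternatingGroup (Fin n))).Walk x y, p.length ≤ 2) ∧
    (((∃ i : Fin n, (x : Equiv.Perm (Fin n)) i = i) ∨
      (∃ i : Fin n, (y : Equiv.Perm (Fin n)) i = i)) →
      ∃ p : (ncGraph (alternatingGroup (Fin n))).Walk x y, p.length ≤ 3) := by
  have h5 : 5 ≤ Nat.card (Fin n) := by simpa using hn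
  obtain ⟨x', hx', hx'i, px, hpx⟩ := exists_ncGraph_walk_length_le_one_fixedPt h5 hx
  obtain ⟨y', hy', hy'i, py, hpy⟩ := exists_ncGraph_walk_length_le_one_fixedPt h5 hy
  refine ⟨?_, exists_ncGraph_walk_length_le_two h5 hx hy, ?_⟩
  · obtain ⟨q, hq⟩ := exists_ncGraph_walk_length_le_two h5 hx' hy' hx'i hy'i
    exact ⟨px.append (q.append py.reverse), by simp; omega⟩
  rintro (hxi | hyi)
  · obtain ⟨q, hq⟩ := exists_ncGraph_walk_length_le_two h5 hx hy' hxi hy'i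
    exact ⟨q.append py.reverse, by simp; omega⟩
  · obtain ⟨q, hq⟩ := exists_ncGraph_walk_length_le_two h5 hx' hy hx'i hyi
    exact ⟨px.append q, by simp; omega⟩
end

section
/- Let n ≥ 5 and let x and y be derangements of the alternating group A_n such that the cyclic subgroup ⟨x⟩ acts intransitively on {1, …, n} and the cyclic subgroup ⟨y⟩ acts intransitively on {1, …, n}. Then d(x,y) ≤ 3 in the non-commuting, non-generating graph nc(A_n). -/
open Equiv Equiv.Perm MulAction
open scoped Pointwise

theorem Set.ncard_inter_add_ncard_inter_compl {α : Type*} [Finite α] (s t : Set α) :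
    (s ∩ t).ncard + (s ∩ tᶜ).ncard = s.ncard := by
  rw [← Set.sdiff_eq]
  exact Set.ncard_inter_add_ncard_sdiff_eq_ncard s t

namespace Equiv.Perm

section
variable {α : Type*}

theorem mem_stabilizer_setOf_sameCycle (σ : Perm α) (a : α) :
    σ ∈ stabilizer (Perm α) {b | σ.SameCycle a b} :=
  mem_stabilizer_set.mpr fun _ => sameCycle_apply_right

theorem mem_stabilizer_pair_of_swaps {σ : Perm α} {s t : α} (hst : σ s = t) (hts : σ t = s) :
    σ ∈ stabilizer (Perm α) ({s, t} : Set α) := by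
  refine mem_stabilizer_set.mpr fun b => ?_
  simp only [Set.mem_insert_iff, Set.mem_singleton_iff, Perm.smul_def]
  rw [σ.injective.eq_iff' hts, σ.injective.eq_iff' hst]
  tauto

theorem one_lt_ncard_of_mem_stabilizer [Finite α] {σ : Perm α} (hσ : σ ∈ derangements α)
    {A : Set α} (hA : σ ∈ stabilizer (Perm α) A) (hA0 : A.Nonempty) : 1 < A.ncard := by
  obtain ⟨a, ha⟩ := hA0
  exact (Set.one_lt_ncard_iff A.toFinite).mpr
    ⟨a, σ a, ha, (mem_stabilizer_set.mp hA a).mpr ha, (hσ a).symm⟩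

theorem apply_apply_eq_of_ncard_le_two [Finite α] {σ : Perm α} (hσ : σ ∈ derangements α)
    {A : Set α} (hA : σ ∈ stabilizer (Perm α) A) (hA2 : A.ncard ≤ 2) {a : α} (ha : a ∈ A) :
    σ (σ a) = a := by
  by_contra h
  have h1 : σ a ∈ A := (mem_stabilizer_set.mp hA a).mpr ha
  have h2 : σ (σ a) ∈ A := (mem_stabilizer_set.mp hA _).mpr h1
  have : 2 < A.ncard := (Set.two_lt_ncard_iff A.toFinite).mpr
    ⟨a, σ a, σ (σ a), ha, h1, h2, (hσ a).symm, Ne.symm h, (hσ (σ a)).symm⟩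
  omega

theorem exists_pair_not_swapped {S : Set α} (hS : 2 < S.ncard) (σ τ : Perm α) :
    ∃ s ∈ S, ∃ t ∈ S, s ≠ t ∧ ¬(σ s = t ∧ σ t = s) ∧ ¬(τ s = t ∧ τ t = s) := by
  obtain ⟨a, b, c, ha, hb, hc, hab, hac, hbc⟩ :=
    (Set.two_lt_ncard_iff (Set.finite_of_ncard_pos (by omega))).mp hS
  by_contra H
  have swapped {s t : α} (hs : s ∈ S) (ht : t ∈ S) (hst : s ≠ t) :
      (σ s = t ∧ σ t = s) ∨ (τ s = t ∧ τ t = s) := by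
    by_contra h
    exact H ⟨s, hs, t, ht, hst, by tauto⟩
  -- one of `σ, τ` would swap two of the three pairs, which share a point
  rcases swapped ha hb hab with h1 | h1 <;> rcases swapped ha hc hac with h2 | h2 <;>
    rcases swapped hb hc hbc with h3 | h3 <;> grind

end

section
variable {α : Type*} [Fintype α] [DecidableEq α]

theorem support_swap_mul_of_swaps {σ : Perm α} {a b : α} (hab : σ a = b) (hba : σ b = a) :
    (swap a b * σ).support = σ.support \ {a, b} := by
  ext c
  simp only [mem_support, Finset.mem_sdiff, Finset.mem_insert, Finset.mem_singleton, mul_apply]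
  by_cases hca : c = a
  · subst hca; simp [hab]
  by_cases hcb : c = b
  · subst hcb; simp [hba]
  rw [swap_apply_of_ne_of_ne (fun h => hcb (σ.injective (h.trans hba.symm)))
    (fun h => hca (σ.injective (h.trans hab.symm)))]
  simp [hca, hcb]

theorem support_eq_univ_of_mem_derangements {σ : Perm α} (hσ : σ ∈ derangements α) :
    σ.support = Finset.univ := by
  ext a; simpa using hσ a

theorem card_ne_five_of_swaps {σ : Perm α} (hσ : σ ∈ derangements α) (hsign : sign σ = 1)
    {a b : α} (hab : σ a = b) (hba : σ b = a) : Nat.card α ≠ 5 := by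
  intro h5
  have hne : a ≠ b := fun h => hσ a (hab.trans h.symm)
  have h3 : (swap a b * σ).support.card = 3 := by
    rw [support_swap_mul_of_swaps hab hba, support_eq_univ_of_mem_derangements hσ,
      Finset.card_sdiff_of_subset (Finset.subset_univ _), Finset.card_univ, Finset.card_pair hne,
      ← Nat.card_eq_fintype_card, h5]
  have := (card_support_eq_three_iff.mp h3).sign
  simp [sign_swap hne, hsign] at this

theorem card_ne_six_of_swaps {σ : Perm α} (hσ : σ ∈ derangements α) (hsign : sign σ = 1)
    {a b c d : α} (hab : σ a = b) (hba : σ b = a) (hcd : σ c = d) (hdc : σ d = c)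
    (hac : a ≠ c) (had : a ≠ d) (hbc : b ≠ c) (hbd : b ≠ d) : Nat.card α ≠ 6 := by
  intro h6
  have hne : a ≠ b := fun h => hσ a (hab.trans h.symm)
  have hne' : c ≠ d := fun h => hσ c (hcd.trans h.symm)
  set τ := swap a b * σ
  have hτc : τ c = d := by simp [τ, hcd, swap_apply_of_ne_of_ne (Ne.symm had) (Ne.symm hbd)]
  have hτd : τ d = c := by simp [τ, hdc, swap_apply_of_ne_of_ne (Ne.symm hac) (Ne.symm hbc)]
  have h2 : (swap c d * τ).support.card = 2 := by
    rw [support_swap_mul_of_swaps hτc hτd, support_swap_mul_of_swaps hab hba,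
      support_eq_univ_of_mem_derangements hσ, sdiff_sdiff_left, Finset.sup_eq_union,
      Finset.card_sdiff_of_subset (Finset.subset_univ _), Finset.card_univ,
      ← Nat.card_eq_fintype_card, h6,
      Finset.card_union_of_disjoint (by simp [hac.symm, had.symm, hbc.symm, hbd.symm]),
      Finset.card_pair hne, Finset.card_pair hne']
  have := (card_support_eq_two.mp h2).sign_eq
  simp [τ, sign_swap hne, sign_swap hne', hsign] at this

theorem swaps_of_commute_swap_mul_swap {σ : Perm α} (hσ : σ ∈ derangements α) {A : Set α}
    (hA : σ ∈ stabilizer (Perm α) A) {u v s t : α} (hu : u ∈ A) (hv : v ∈ A) (hs : s ∉ A)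
    (ht : t ∉ A) (huv : u ≠ v) (hst : s ≠ t) (h : Commute σ (swap u v * swap s t)) :
    (σ u = v ∧ σ v = u) ∧ (σ s = t ∧ σ t = s) := by
  have hA' (a : α) : σ a ∈ A ↔ a ∈ A := mem_stabilizer_set.mp hA a
  have hdisj : (swap u v).Disjoint (swap s t) :=
    disjoint_swap_swap (by simp only [List.nodup_cons, List.mem_cons, List.not_mem_nil]; grind)
  have hsupp (a : α) : a ∈ (swap u v * swap s t).support ↔ a = u ∨ a = v ∨ a = s ∨ a = t := by
    simp [hdisj.support_mul, support_swap huv, support_swap hst]; tauto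
  have hσ' (a : α) := (mem_support_iff_of_commute h a)
  simp only [hsupp] at hσ'
  have := hσ u; have := hσ v; have := hσ s; have := hσ t
  have := hA' u; have := hA' v; have := hA' s; have := hA' t
  grind

end

end Equiv.Perm

theorem ncGraph_adj_of_not_commute {G : Type*} [Group G] {a b : G} (hab : ¬Commute a b)
    (hgen : Subgroup.closure {a, b} ≠ ⊤) : (ncGraph G).Adj a b := by
  rw [ncGraph, SimpleGraph.fromRel_adj]
  exact ⟨fun h => hab (h ▸ Commute.refl a), Or.inl ⟨hab, hgen⟩⟩

namespace alternatingGroup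

variable {α : Type*} [Fintype α] [DecidableEq α]

theorem swap_mul_swap_mem {u v s t : α} (huv : u ≠ v) (hst : s ≠ t) :
    swap u v * swap s t ∈ alternatingGroup α := by
  simp [mem_alternatingGroup, sign_swap huv, sign_swap hst]

theorem ncGraph_adj_of_mem_stabilizer {a b : alternatingGroup α} {S : Set α}
    (ha : a ∈ stabilizer (alternatingGroup α) S) (hb : b ∈ stabilizer (alternatingGroup α) S)
    (hS : S.Nonempty) (hSc : Sᶜ.Nontrivial) (hab : ¬Commute (a : Perm α) (b : Perm α)) :
    (ncGraph (alternatingGroup α)).Adj a b := by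
  refine ncGraph_adj_of_not_commute (fun h => hab (h.map (alternatingGroup α).subtype)) fun htop =>
    stabilizer_ne_top hS hSc (top_le_iff.mp ?_)
  rw [← htop, Subgroup.closure_le]
  exact Set.insert_subset ha (Set.singleton_subset_iff.mpr hb)

theorem ncGraph_adj_swap_mul_swap {u v v' s t : α} (huv : u ≠ v) (huv' : u ≠ v') (hvv' : v ≠ v')
    (hst : s ≠ t) (hu : u ∉ ({s, t} : Set α)) (hv : v ∉ ({s, t} : Set α))
    (hv' : v' ∉ ({s, t} : Set α)) :
    (ncGraph (alternatingGroup α)).Adj ⟨swap u v * swap s t, swap_mul_swap_mem huv hst⟩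
      ⟨swap u v' * swap s t, swap_mul_swap_mem huv' hst⟩ := by
  have hst_mem {a b : α} (ha : a ∉ ({s, t} : Set α)) (hb : b ∉ ({s, t} : Set α)) :
      swap a b * swap s t ∈ stabilizer (Perm α) ({s, t} : Set α) :=
    mul_mem (swap_mem_stabilizer.mpr (iff_of_false ha hb))
      (swap_mem_stabilizer.mpr (iff_of_true (by simp) (by simp)))
  refine ncGraph_adj_of_mem_stabilizer (hst_mem hu hv) (hst_mem hu hv') (by simp)
    ⟨u, hu, v, hv, huv⟩ fun h => huv' ?_
  simp only [Set.mem_insert_iff, Set.mem_singleton_iff, not_or] at hu hv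
  have := congrArg (· v) h.eq
  simpa [swap_apply_of_ne_of_ne, hu, hv, huv.symm, hvv'] using this

variable {x y : alternatingGroup α}

theorem exists_walk_of_swap_mul_swap (hx : (x : Perm α) ∈ derangements α)
    (hy : (y : Perm α) ∈ derangements α) {A B : Set α}
    (hA : x ∈ stabilizer (alternatingGroup α) A) (hB : y ∈ stabilizer (alternatingGroup α) B)
    {u v v' s t : α} (hu : u ∈ A ∩ B) (hv : v ∈ A) (hv' : v' ∈ B) (hs : s ∉ A ∪ B)
    (ht : t ∉ A ∪ B) (huv : u ≠ v) (huv' : u ≠ v') (hst : s ≠ t)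
    (hxuv : ¬(((x : Perm α) u = v ∧ (x : Perm α) v = u) ∧
      ((x : Perm α) s = t ∧ (x : Perm α) t = s)))
    (hyuv' : ¬(((y : Perm α) u = v' ∧ (y : Perm α) v' = u) ∧
      ((y : Perm α) s = t ∧ (y : Perm α) t = s))) :
    ∃ p : (ncGraph (alternatingGroup α)).Walk x y, p.length ≤ 3 := by
  simp only [Set.mem_inter_iff, Set.mem_union, not_or] at hu hs ht
  have hxz_nc : ¬Commute (x : Perm α) (swap u v * swap s t) := fun h =>
    hxuv (swaps_of_commute_swap_mul_swap hx hA hu.1 hv hs.1 ht.1 huv hst h)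
  have hyw_nc : ¬Commute (y : Perm α) (swap u v' * swap s t) := fun h =>
    hyuv' (swaps_of_commute_swap_mul_swap hy hB hu.2 hv' hs.2 ht.2 huv' hst h)
  let z : alternatingGroup α := ⟨swap u v * swap s t, swap_mul_swap_mem huv hst⟩
  let w : alternatingGroup α := ⟨swap u v' * swap s t, swap_mul_swap_mem huv' hst⟩
  have hzA : z ∈ stabilizer (alternatingGroup α) A :=
    mul_mem (swap_mem_stabilizer.mpr (iff_of_true hu.1 hv))
      (swap_mem_stabilizer.mpr (iff_of_false hs.1 ht.1))
  have hwB : w ∈ stabilizer (alternatingGroup α) B :=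
    mul_mem (swap_mem_stabilizer.mpr (iff_of_true hu.2 hv'))
      (swap_mem_stabilizer.mpr (iff_of_false hs.2 ht.2))
  have hxz : (ncGraph _).Adj x z :=
    ncGraph_adj_of_mem_stabilizer hA hzA ⟨u, hu.1⟩ ⟨s, hs.1, t, ht.1, hst⟩ hxz_nc
  have hwy : (ncGraph _).Adj w y := ncGraph_adj_of_mem_stabilizer hwB hB ⟨u, hu.2⟩
    ⟨s, hs.2, t, ht.2, hst⟩ (mt Commute.symm hyw_nc)
  by_cases hvv' : v = v'
  · subst hvv'
    exact ⟨.cons hxz (.cons hwy .nil), by simp⟩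
  have not_mem_st {a : α} (ha : a ∈ A ∨ a ∈ B) : a ∉ ({s, t} : Set α) := by
    rintro (rfl | rfl) <;> tauto
  have hzw : (ncGraph _).Adj z w := ncGraph_adj_swap_mul_swap huv huv' hvv' hst
    (not_mem_st (.inl hu.1)) (not_mem_st (.inl hv)) (not_mem_st (.inr hv'))
  exact ⟨.cons hxz (.cons hzw (.cons hwy .nil)), by simp⟩

theorem exists_walk_of_inter_nonempty (hx : (x : Perm α) ∈ derangements α)
    (hy : (y : Perm α) ∈ derangements α) {A B : Set α}
    (hA : x ∈ stabilizer (alternatingGroup α) A) (hB : y ∈ stabilizer (alternatingGroup α) B)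
    (hAB : (A ∩ B).Nonempty) (hAB' : 2 < (Aᶜ ∩ Bᶜ).ncard) :
    ∃ p : (ncGraph (alternatingGroup α)).Walk x y, p.length ≤ 3 := by
  obtain ⟨u, hu⟩ := hAB
  obtain ⟨s, hs, t, ht, hst, hxst, hyst⟩ := exists_pair_not_swapped hAB' (x : Perm α) y
  rw [← Set.compl_union] at hs ht
  have hxu : (x : Perm α) u ∈ A := (mem_stabilizer_set.mp hA u).mpr hu.1
  have hyu : (y : Perm α) u ∈ B := (mem_stabilizer_set.mp hB u).mpr hu.2
  exact exists_walk_of_swap_mul_swap hx hy hA hB hu hxu hyu hs ht (hx u).symm (hy u).symm hst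
    (fun h => hxst h.2) (fun h => hyst h.2)

theorem exists_walk_of_swaps (hn : 5 ≤ Nat.card α) (hx : (x : Perm α) ∈ derangements α)
    (hy : (y : Perm α) ∈ derangements α) {s t : α} (hst : s ≠ t)
    (hxs : (x : Perm α) s = t) (hxt : (x : Perm α) t = s)
    (hys : (y : Perm α) s = t) (hyt : (y : Perm α) t = s) :
    ∃ p : (ncGraph (alternatingGroup α)).Walk x y, p.length ≤ 3 := by
  refine exists_walk_of_inter_nonempty hx hy (mem_stabilizer_pair_of_swaps hxs hxt)
    (mem_stabilizer_pair_of_swaps hys hyt) (by simp) ?_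
  have := Set.ncard_add_ncard_compl ({s, t} : Set α)
  rw [Set.ncard_pair hst] at this
  rw [Set.inter_self]
  omega

theorem exists_walk_of_disjoint_pairs (hn : 5 ≤ Nat.card α)
    (hx : (x : Perm α) ∈ derangements α) (hy : (y : Perm α) ∈ derangements α) {A B : Set α}
    (hA : x ∈ stabilizer (alternatingGroup α) A) (hB : y ∈ stabilizer (alternatingGroup α) B)
    (hAB : A ∩ B = ∅) (hA2 : A.ncard = 2) (hB2 : B.ncard = 2) :
    ∃ p : (ncGraph (alternatingGroup α)).Walk x y, p.length ≤ 3 := by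
  obtain ⟨e, he⟩ := Set.nonempty_of_ncard_ne_zero (s := A) (by omega)
  obtain ⟨g, hg⟩ := Set.nonempty_of_ncard_ne_zero (s := B) (by omega)
  set f := (x : Perm α) e
  have hf : f ∈ A := (mem_stabilizer_set.mp hA e).mpr he
  have hxf : (x : Perm α) f = e := apply_apply_eq_of_ncard_le_two hx hA hA2.le he
  have hAB' {a : α} (ha : a ∈ A) : a ∉ B := fun hb => (hAB ▸ ⟨ha, hb⟩ : a ∈ (∅ : Set α))
  obtain h5 | h6 : Nat.card α = 5 ∨ 6 ≤ Nat.card α := by omega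
  · exact absurd h5 (card_ne_five_of_swaps hx (mem_alternatingGroup.mp x.2) rfl hxf)
  by_cases hyef : (y : Perm α) e = f ∧ (y : Perm α) f = e
  · exact exists_walk_of_swaps (by omega) hx hy (hx e).symm rfl hxf hyef.1 hyef.2
  -- the path goes through `(g v)(e f)` with `v ∈ Aᶜ ∩ Bᶜ`, chosen so that `x g ≠ v`
  have hcell : 1 < (Aᶜ ∩ Bᶜ).ncard := by
    have := Set.ncard_add_ncard_compl (A ∪ B)
    have := Set.ncard_union_le A B
    rw [Set.compl_union] at *
    omega
  obtain ⟨v, hv, hvg⟩ := Set.exists_ne_of_one_lt_ncard hcell ((x : Perm α) g)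
  have hxAc : x ∈ stabilizer (alternatingGroup α) Aᶜ := by rwa [stabilizer_compl]
  have hgA : g ∉ A := fun h => hAB' h hg
  have hyg : (y : Perm α) g ∈ B := (mem_stabilizer_set.mp hB g).mpr hg
  have hgv : g ≠ v := fun h => hv.2 (h ▸ hg)
  have hAcB {a : α} (ha : a ∈ A) : a ∉ Aᶜ ∪ B := by simp [ha, hAB' ha]
  exact exists_walk_of_swap_mul_swap hx hy hxAc hB ⟨hgA, hg⟩ hv.1 hyg (hAcB he) (hAcB hf) hgv
    (hy g).symm (hx e).symm (fun h => hvg h.1.1.symm) (fun h => hyef h.2)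

theorem exists_walk_of_not_swaps (hn : 5 ≤ Nat.card α) (hx : (x : Perm α) ∈ derangements α)
    (hy : (y : Perm α) ∈ derangements α) {A B : Set α}
    (hA : x ∈ stabilizer (alternatingGroup α) A) (hB : y ∈ stabilizer (alternatingGroup α) B)
    {u s t : α} (hu : u ∈ A ∩ B) (hs : s ∉ A ∪ B) (ht : t ∉ A ∪ B) (hst : s ≠ t)
    (hAc : Aᶜ.ncard ≤ 4) (hyst : ¬((y : Perm α) s = t ∧ (y : Perm α) t = s)) :
    ∃ p : (ncGraph (alternatingGroup α)).Walk x y, p.length ≤ 3 := by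
  have hsA : s ∉ A := fun h => hs (.inl h)
  have htA : t ∉ A := fun h => ht (.inl h)
  have hyu : (y : Perm α) u ∈ B := (mem_stabilizer_set.mp hB u).mpr hu.2
  have walk_of {v : α} (hv : v ∈ A) (huv : u ≠ v)
      (hxuv : ¬(((x : Perm α) u = v ∧ (x : Perm α) v = u) ∧
        ((x : Perm α) s = t ∧ (x : Perm α) t = s))) :
      ∃ p : (ncGraph (alternatingGroup α)).Walk x y, p.length ≤ 3 :=
    exists_walk_of_swap_mul_swap hx hy hA hB hu hv hyu hs ht huv (hy u).symm hst hxuv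
      fun h => hyst h.2
  have hxu : (x : Perm α) u ∈ A := (mem_stabilizer_set.mp hA u).mpr hu.1
  by_cases hxst : ¬((x : Perm α) s = t ∧ (x : Perm α) t = s)
  · exact walk_of hxu (hx u).symm fun h => hxst h.2
  rw [not_not] at hxst
  by_cases hv : ∃ v ∈ A, v ≠ u ∧ v ≠ (x : Perm α) u
  · obtain ⟨v, hv, hvu, hvxu⟩ := hv
    exact walk_of hv hvu.symm fun h => hvxu h.1.1.symm
  -- otherwise `A = {u, x u}`, and `x` swaps `u, x u` and `s, t` with at most two points left
  push Not at hv
  have hsub : A ⊆ {u, (x : Perm α) u} := fun a ha => by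
    by_cases hau : a = u
    · exact .inl hau
    · exact .inr (hv a ha hau)
  have hA2 : A.ncard ≤ 2 := (Set.ncard_le_ncard hsub).trans (Set.ncard_pair (hx u).symm).le
  have hxxu := apply_apply_eq_of_ncard_le_two hx hA hA2 hu.1
  have hsign := mem_alternatingGroup.mp x.2
  have := Set.ncard_add_ncard_compl A
  obtain h5 | h6 : Nat.card α = 5 ∨ Nat.card α = 6 := by omega
  · exact (card_ne_five_of_swaps hx hsign hxst.1 hxst.2 h5).elim
  · exact (card_ne_six_of_swaps hx hsign rfl hxxu hxst.1 hxst.2 (ne_of_mem_of_not_mem hu.1 hsA)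
      (ne_of_mem_of_not_mem hu.1 htA) (ne_of_mem_of_not_mem hxu hsA)
      (ne_of_mem_of_not_mem hxu htA) h6).elim

theorem exists_walk_of_compl_inter_ncard_eq_two (hn : 5 ≤ Nat.card α)
    (hx : (x : Perm α) ∈ derangements α) (hy : (y : Perm α) ∈ derangements α) {A B : Set α}
    (hA : x ∈ stabilizer (alternatingGroup α) A) (hB : y ∈ stabilizer (alternatingGroup α) B)
    (hAB : (A ∩ B).Nonempty) (hAB' : (Aᶜ ∩ Bᶜ).ncard = 2) (hAc : Aᶜ.ncard ≤ 4)
    (hBc : Bᶜ.ncard ≤ 4) :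
    ∃ p : (ncGraph (alternatingGroup α)).Walk x y, p.length ≤ 3 := by
  obtain ⟨u, hu⟩ := hAB
  obtain ⟨s, t, hst, hst'⟩ := Set.ncard_eq_two.mp hAB'
  have hs : s ∉ A ∪ B := by rw [← Set.mem_compl_iff, Set.compl_union, hst']; simp
  have ht : t ∉ A ∪ B := by rw [← Set.mem_compl_iff, Set.compl_union, hst']; simp
  by_cases hyst : (y : Perm α) s = t ∧ (y : Perm α) t = s
  · by_cases hxst : (x : Perm α) s = t ∧ (x : Perm α) t = s
    · exact exists_walk_of_swaps hn hx hy hst hxst.1 hxst.2 hyst.1 hyst.2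
    · rw [Set.inter_comm] at hu
      rw [Set.union_comm] at hs ht
      obtain ⟨p, hp⟩ := exists_walk_of_not_swaps hn hy hx hB hA hu hs ht hst hBc hxst
      exact ⟨p.reverse, by simpa using hp⟩
  · exact exists_walk_of_not_swaps hn hx hy hA hB hu hs ht hst hAc hyst

theorem exists_walk_of_inter_eq_empty (hn : 5 ≤ Nat.card α)
    (hx : (x : Perm α) ∈ derangements α) (hy : (y : Perm α) ∈ derangements α) {A B : Set α}
    (hA : x ∈ stabilizer (alternatingGroup α) A) (hB : y ∈ stabilizer (alternatingGroup α) B)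
    (hAB : A ∩ B = ∅) (hA0 : A.Nonempty) (hB0 : B.Nonempty) :
    ∃ p : (ncGraph (alternatingGroup α)).Walk x y, p.length ≤ 3 := by
  have hA2 := one_lt_ncard_of_mem_stabilizer hx hA hA0
  have hB2 := one_lt_ncard_of_mem_stabilizer hy hB hB0
  have hdisj := Set.disjoint_iff_inter_eq_empty.mpr hAB
  have hABc : A ∩ Bᶜ = A := Set.inter_eq_left.mpr (Set.subset_compl_iff_disjoint_right.mpr hdisj)
  have hAcB : Aᶜ ∩ B = B := Set.inter_eq_right.mpr
    (Set.subset_compl_iff_disjoint_right.mpr hdisj.symm)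
  have hAc : x ∈ stabilizer (alternatingGroup α) Aᶜ := by rwa [stabilizer_compl]
  have hBc : y ∈ stabilizer (alternatingGroup α) Bᶜ := by rwa [stabilizer_compl]
  by_cases hA3 : 2 < A.ncard
  · exact exists_walk_of_inter_nonempty hx hy hAc hB (by rwa [hAcB]) (by rwa [compl_compl, hABc])
  by_cases hB3 : 2 < B.ncard
  · exact exists_walk_of_inter_nonempty hx hy hA hBc (by rwa [hABc]) (by rwa [compl_compl, hAcB])
  exact exists_walk_of_disjoint_pairs hn hx hy hA hB hAB (by omega) (by omega)

theorem exists_walk_of_cells_nonempty (hn : 5 ≤ Nat.card α)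
    (hx : (x : Perm α) ∈ derangements α) (hy : (y : Perm α) ∈ derangements α) {A B : Set α}
    (hA : x ∈ stabilizer (alternatingGroup α) A) (hB : y ∈ stabilizer (alternatingGroup α) B)
    (h1 : (A ∩ B).Nonempty) (h2 : (A ∩ Bᶜ).Nonempty) (h3 : (Aᶜ ∩ B).Nonempty)
    (h4 : (Aᶜ ∩ Bᶜ).Nonempty) :
    ∃ p : (ncGraph (alternatingGroup α)).Walk x y, p.length ≤ 3 := by
  by_contra hfar
  have le_two (A' B' : Set α) (hA' : x ∈ stabilizer (alternatingGroup α) A')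
      (hB' : y ∈ stabilizer (alternatingGroup α) B') (h0 : (A' ∩ B').Nonempty) :
      (A'ᶜ ∩ B'ᶜ).ncard ≤ 2 := by
    by_contra h
    exact hfar (exists_walk_of_inter_nonempty hx hy hA' hB' h0 (by omega))
  have ne_two (A' B' : Set α) (hA' : x ∈ stabilizer (alternatingGroup α) A')
      (hB' : y ∈ stabilizer (alternatingGroup α) B') (h0 : (A' ∩ B').Nonempty)
      (hA4 : A'ᶜ.ncard ≤ 4) (hB4 : B'ᶜ.ncard ≤ 4) : (A'ᶜ ∩ B'ᶜ).ncard ≠ 2 := fun h =>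
    hfar (exists_walk_of_compl_inter_ncard_eq_two hn hx hy hA' hB' h0 h hA4 hB4)
  have hAc : x ∈ stabilizer (alternatingGroup α) Aᶜ := by rwa [stabilizer_compl]
  have hBc : y ∈ stabilizer (alternatingGroup α) Bᶜ := by rwa [stabilizer_compl]
  -- complementing `A` or `B` permutes the four cells
  have := le_two A B hA hB h1
  have := le_two Aᶜ Bᶜ hAc hBc h4
  have := le_two A Bᶜ hA hBc h2
  have := le_two Aᶜ B hAc hB h3
  have := ne_two A B hA hB h1
  have := ne_two Aᶜ Bᶜ hAc hBc h4
  have := ne_two A Bᶜ hA hBc h2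
  have := ne_two Aᶜ B hAc hB h3
  simp only [compl_compl] at *
  have := Set.ncard_inter_add_ncard_inter_compl A B
  have := Set.ncard_inter_add_ncard_inter_compl Aᶜ B
  have : (A ∩ B).ncard + (Aᶜ ∩ B).ncard = B.ncard := by
    rw [Set.inter_comm A, Set.inter_comm Aᶜ]; exact Set.ncard_inter_add_ncard_inter_compl B A
  have := Set.ncard_add_ncard_compl A
  have := Set.ncard_add_ncard_compl B
  have := h1.ncard_pos; have := h2.ncard_pos; have := h3.ncard_pos; have := h4.ncard_pos
  omega

theorem exists_walk_of_mem_stabilizer (hn : 5 ≤ Nat.card α)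
    (hx : (x : Perm α) ∈ derangements α) (hy : (y : Perm α) ∈ derangements α) {A B : Set α}
    (hA : x ∈ stabilizer (alternatingGroup α) A) (hB : y ∈ stabilizer (alternatingGroup α) B)
    (hA0 : A.Nonempty) (hA1 : Aᶜ.Nonempty) (hB0 : B.Nonempty) (hB1 : Bᶜ.Nonempty) :
    ∃ p : (ncGraph (alternatingGroup α)).Walk x y, p.length ≤ 3 := by
  have hAc : x ∈ stabilizer (alternatingGroup α) Aᶜ := by rwa [stabilizer_compl]
  have hBc : y ∈ stabilizer (alternatingGroup α) Bᶜ := by rwa [stabilizer_compl]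
  by_cases h1 : A ∩ B = ∅
  · exact exists_walk_of_inter_eq_empty hn hx hy hA hB h1 hA0 hB0
  by_cases h2 : A ∩ Bᶜ = ∅
  · exact exists_walk_of_inter_eq_empty hn hx hy hA hBc h2 hA0 hB1
  by_cases h3 : Aᶜ ∩ B = ∅
  · exact exists_walk_of_inter_eq_empty hn hx hy hAc hB h3 hA1 hB0
  by_cases h4 : Aᶜ ∩ Bᶜ = ∅
  · exact exists_walk_of_inter_eq_empty hn hx hy hAc hBc h4 hA1 hB1
  simp only [← Set.nonempty_iff_ne_empty] at h1 h2 h3 h4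
  exact exists_walk_of_cells_nonempty hn hx hy hA hB h1 h2 h3 h4

end alternatingGroup

/-- Let `n ≥ 5` and let `x` and `y` be derangements of `Aₙ` each generating a cyclic
subgroup acting intransitively on `{1, …, n}`.  Then `d(x, y) ≤ 3` in `nc(Aₙ)`. -/
theorem nc_alternating_intransitive_derangements (n : ℕ) (hn : 5 ≤ n)
    (x y : alternatingGroup (Fin n))
    (hxd : ∀ i : Fin n, (x : Equiv.Perm (Fin n)) i ≠ i)
    (hyd : ∀ i : Fin n, (y : Equiv.Perm (Fin n)) i ≠ i)
    (hxt : ¬ ∀ a b : Fin n, ∃ k : ℤ, ((x : Equiv.Perm (Fin n)) ^ k) a = b)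
    (hyt : ¬ ∀ a b : Fin n, ∃ k : ℤ, ((y : Equiv.Perm (Fin n)) ^ k) a = b) :
    ∃ p : (ncGraph (alternatingGroup (Fin n))).Walk x y, p.length ≤ 3 := by
  obtain ⟨a, b, hab⟩ : ∃ a b, ¬(x : Perm (Fin n)).SameCycle a b := by simpa [SameCycle] using hxt
  obtain ⟨c, d, hcd⟩ : ∃ c d, ¬(y : Perm (Fin n)).SameCycle c d := by simpa [SameCycle] using hyt
  exact alternatingGroup.exists_walk_of_mem_stabilizer (by simpa using hn) hxd hyd
    (mem_stabilizer_setOf_sameCycle _ a) (mem_stabilizer_setOf_sameCycle _ c)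
    ⟨a, SameCycle.refl _ _⟩ ⟨b, hab⟩ ⟨c, SameCycle.refl _ _⟩ ⟨d, hcd⟩
end

section
/- Let F be a finite field with q elements, let a be a nonzero element of F, and let r be the multiplicative order of a. Then the monic irreducible factors in F[x] of the binomial x^{q-1} − a are exactly the polynomials x^r − b with b a nonzero element of F satisfying b^{(q-1)/r} = a. That is: (1) for every nonzero b ∈ F with b^{(q-1)/r} = a, the polynomial x^r − b is irreducible over F and divides x^{q-1} − a; and (2) every monic irreducible polynomial f ∈ F[x] dividing x^{q-1} − a equals x^r − b for some nonzero b ∈ F with b^{(q-1)/r} = a. -/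
/-!
Let `α` be a root of `x^(q-1) - a` in an extension of `F`. Then `α^q = a α`, hence
`α^(q^k) = a^k α`, so `α^(q^k) = α` exactly when `r ∣ k`. Over a finite field the degree of
`α` is characterised by `deg α ∣ k ↔ α^(q^k) = α`, so `α` has degree `r`. Moreover
`(α^r)^q = α^r` puts `b := α^r` in `F`, and `b^((q-1)/r) = α^(q-1) = a`. Thus the minimal
polynomial of `α`, a monic divisor of `x^r - b` of degree `r`, is `x^r - b`. Conversely every
root of such an `x^r - b` is a root of `x^(q-1) - a`, so `x^r - b` is a minimal polynomial,
hence irreducible.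
-/

open Polynomial

namespace FiniteField

variable {F K : Type*} [Field F] [Fintype F] [Field K] [Algebra F K]

theorem natDegree_minpoly_dvd_iff {α : K} (hα : IsIntegral F α) {n : ℕ} :
    (minpoly F α).natDegree ∣ n ↔ α ^ Fintype.card F ^ n = α := by
  rw [(minpoly.irreducible hα).natDegree_dvd_iff_dvd_X_pow_card_pow_sub_X, minpoly.dvd_iff,
    Fintype.card_eq_nat_card]
  simp [sub_eq_zero]

theorem mem_range_algebraMap_of_pow_card_eq_self {β : K} (hβ : β ^ Fintype.card F = β) :
    β ∈ (algebraMap F K).range := by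
  have hint : IsIntegral F β :=
    ⟨X ^ Fintype.card F - X, monic_X_pow_sub (by simpa using Fintype.one_lt_card),
      by simp [hβ]⟩
  rw [← minpoly.natDegree_eq_one_iff, ← Nat.dvd_one, natDegree_minpoly_dvd_iff hint, pow_one,
    hβ]

section RootOfBinomial

variable {a : F} {α : K} (hα : α ^ (Fintype.card F - 1) = algebraMap F K a)
include hα

theorem isIntegral_of_pow_card_sub_one_eq : IsIntegral F α :=
  ⟨X ^ (Fintype.card F - 1) - C a,
    monic_X_pow_sub_C a (Nat.sub_ne_zero_of_lt Fintype.one_lt_card), by simp [hα]⟩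

theorem ne_zero_of_pow_card_sub_one_eq (ha : a ≠ 0) : α ≠ 0 := by
  rintro rfl
  rw [zero_pow (Nat.sub_ne_zero_of_lt Fintype.one_lt_card), eq_comm,
    map_eq_zero_iff _ (algebraMap F K).injective] at hα
  exact ha hα

theorem pow_card_of_pow_card_sub_one_eq : α ^ Fintype.card F = algebraMap F K a * α := by
  rw [← Nat.sub_one_add_one Fintype.card_ne_zero, pow_succ, hα]

theorem pow_card_pow_of_pow_card_sub_one_eq (k : ℕ) :
    α ^ Fintype.card F ^ k = algebraMap F K a ^ k * α := by
  induction k with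
  | zero => simp
  | succ k ih =>
    rw [pow_succ, pow_mul, ih, mul_pow, pow_card_of_pow_card_sub_one_eq hα, ← pow_mul,
      mul_comm k, pow_mul, ← map_pow, FiniteField.pow_card]
    ring

theorem natDegree_minpoly_of_pow_card_sub_one_eq (ha : a ≠ 0) :
    (minpoly F α).natDegree = orderOf a := by
  have hdvd (k : ℕ) : (minpoly F α).natDegree ∣ k ↔ orderOf a ∣ k := by
    rw [natDegree_minpoly_dvd_iff (isIntegral_of_pow_card_sub_one_eq hα),
      pow_card_pow_of_pow_card_sub_one_eq hα, mul_left_eq_self₀,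
      or_iff_left (ne_zero_of_pow_card_sub_one_eq hα ha), ← map_pow,
      map_eq_one_iff _ (algebraMap F K).injective, orderOf_dvd_iff_pow_eq_one]
  exact Nat.dvd_antisymm ((hdvd _).2 dvd_rfl) ((hdvd _).1 dvd_rfl)

theorem exists_algebraMap_eq_pow_orderOf : ∃ b : F, algebraMap F K b = α ^ orderOf a := by
  refine mem_range_algebraMap_of_pow_card_eq_self ?_
  rw [← pow_mul, mul_comm, pow_mul, pow_card_of_pow_card_sub_one_eq hα, mul_pow, ← map_pow,
    pow_orderOf_eq_one, map_one, one_mul]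

theorem minpoly_eq_X_pow_orderOf_sub_C (ha : a ≠ 0) {b : F}
    (hb : algebraMap F K b = α ^ orderOf a) : minpoly F α = X ^ orderOf a - C b := by
  have hr : orderOf a ≠ 0 := by
    rw [← natDegree_minpoly_of_pow_card_sub_one_eq hα ha]
    exact (minpoly.natDegree_pos (isIntegral_of_pow_card_sub_one_eq hα)).ne'
  refine (eq_of_monic_of_dvd_of_natDegree_le (minpoly.monic
    (isIntegral_of_pow_card_sub_one_eq hα)) (monic_X_pow_sub_C b hr) ?_ ?_).symm
  · exact minpoly.dvd F α (by simp [hb])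
  · rw [natDegree_X_pow_sub_C, natDegree_minpoly_of_pow_card_sub_one_eq hα ha]

theorem pow_div_orderOf_eq (ha : a ≠ 0) {b : F} (hb : algebraMap F K b = α ^ orderOf a) :
    b ^ ((Fintype.card F - 1) / orderOf a) = a := by
  apply (algebraMap F K).injective
  rw [map_pow, hb, ← pow_mul,
    Nat.mul_div_cancel' (orderOf_dvd_of_pow_eq_one (pow_card_sub_one_eq_one a ha)), hα]

end RootOfBinomial

end FiniteField

open FiniteField

/-- Let `F` be a finite field with `q` elements, `a ∈ Fˣ` of multiplicative order `r`.
The monic irreducible factors of `x^(q-1) - a` in `F[x]` are exactly the binomials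
`x^r - b` with `b ∈ Fˣ` and `b^((q-1)/r) = a`. -/
theorem irreducible_factors_of_binomial (F : Type*) [Field F] [Fintype F]
    (q : ℕ) (hq : q = Fintype.card F)
    (a : F) (ha : a ≠ 0) (r : ℕ) (hr : r = orderOf a) :
    (∀ b : F, b ≠ 0 → b ^ ((q - 1) / r) = a →
      Irreducible (X ^ r - C b : F[X]) ∧
        (X ^ r - C b : F[X]) ∣ (X ^ (q - 1) - C a)) ∧
    (∀ f : F[X], f.Monic → Irreducible f → f ∣ (X ^ (q - 1) - C a) →
      ∃ b : F, b ≠ 0 ∧ b ^ ((q - 1) / r) = a ∧ f = X ^ r - C b) := by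
  subst hq hr
  have hr : orderOf a ∣ Fintype.card F - 1 :=
    orderOf_dvd_of_pow_eq_one (pow_card_sub_one_eq_one a ha)
  have hr0 : orderOf a ≠ 0 :=
    ne_zero_of_dvd_ne_zero (Nat.sub_ne_zero_of_lt Fintype.one_lt_card) hr
  refine ⟨fun b _ hba => ?_, fun f hfm hfi hfa => ?_⟩
  · obtain ⟨α, hα⟩ :=
      IsAlgClosed.exists_aeval_eq_zero (AlgebraicClosure F) (X ^ orderOf a - C b)
      (by rw [degree_X_pow_sub_C (Nat.pos_of_ne_zero hr0)]; exact_mod_cast hr0)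
    have hαb : algebraMap F _ b = α ^ orderOf a := (sub_eq_zero.mp (by simpa using hα)).symm
    have hαa : α ^ (Fintype.card F - 1) = algebraMap F _ a := by
      rw [← Nat.mul_div_cancel' hr, pow_mul, ← hαb, ← map_pow, hba]
    rw [← minpoly_eq_X_pow_orderOf_sub_C hαa ha hαb]
    exact ⟨minpoly.irreducible (isIntegral_of_pow_card_sub_one_eq hαa),
      minpoly.dvd F α (by simp [hαa])⟩
  · obtain ⟨α, hα⟩ := IsAlgClosed.exists_aeval_eq_zero (AlgebraicClosure F) f
      (degree_pos_of_irreducible hfi).ne'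
    have hαa : α ^ (Fintype.card F - 1) = algebraMap F _ a := by
      simpa [sub_eq_zero] using aeval_eq_zero_of_dvd_aeval_eq_zero hfa hα
    obtain ⟨b, hb⟩ := exists_algebraMap_eq_pow_orderOf hαa
    refine ⟨b, ?_, pow_div_orderOf_eq hαa ha hb, ?_⟩
    · rintro rfl
      rw [map_zero, eq_comm, pow_eq_zero_iff hr0] at hb
      exact ne_zero_of_pow_card_sub_one_eq hαa ha hb
    · rw [minpoly.eq_of_irreducible_of_monic hfi hα hfm,
        minpoly_eq_X_pow_orderOf_sub_C hαa ha hb]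
end

section
/- Let F be a finite field with q elements, let n be a positive integer, and let A be an element of SL(n,F) such that A^{q²−1} is a scalar matrix (i.e., lies in the center of SL(n,F)) and such that the cyclic group generated by A acts irreducibly on F^n, meaning the only F-subspaces W of F^n with A·W ⊆ W are the zero subspace and F^n itself. Then n ∈ {1, 2}. If, in addition, n = 2 and A^{q−1} lies in the center of SL(2,F), then q ≡ 3 (mod 4). -/
/-!
Irreducibility makes `Fⁿ` a simple `F[X]`-module via `A`, hence `Fⁿ ≅ L := F[X]/I` for a
maximal ideal `I`, with `A` acting as multiplication by `α = X mod I`. So `L = F(α)` is the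
field with `qⁿ` elements, the Frobenius orbit of `α` has length `n`, and
`1 = det A = N(α) = ∏_{i<n} α^(qⁱ)`. The centrality of `A^(q²-1)` says `α^(q²) = c α` with
`c ∈ F`. If `n = 2t` then `c` is a primitive `t`-th root of unity and the norm condition
forces `β = α^(q+1)`, which satisfies `β^q = c β`, to be a `t`-th root of unity, hence a power
of `c`; thus `β ∈ F` and `c = 1`, i.e. `t = 1`. If `n = 2t + 1` is odd, then `α^q = d α` with
`d = c⁻ᵗ` a primitive `n`-th root of unity and the norm condition gives `αⁿ = 1`, so the same
argument with `α` in place of `β` gives `d = 1`, i.e. `n = 1`. For `n = 2` and `A^(q-1)` central, the order of `α` divides `2(q-1)` and `q+1` but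
not `q-1`, which forces `q ≡ 3 (mod 4)`.
-/

open Polynomial Function Module Finset

lemma isPeriodicPt_pow_iff {M : Type*} [Monoid M] {q e : ℕ} {x : M} :
    IsPeriodicPt (· ^ q) e x ↔ x ^ q ^ e = x := by
  rw [IsPeriodicPt, IsFixedPt, pow_iterate]

lemma pow_pow_eq_pow_mul_of_pow_eq_mul {M : Type*} [CommMonoid M] {m : ℕ} {x c : M}
    (hc : c ^ m = c) (hx : x ^ m = c * x) (j : ℕ) : x ^ m ^ j = c ^ j * x := by
  induction j with
  | zero => simp
  | succ j ih => rw [pow_succ, pow_mul, ih, mul_pow, pow_right_comm, hc, hx, pow_succ, mul_assoc]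

lemma Finset.prod_range_two_mul {M : Type*} [CommMonoid M] (f : ℕ → M) (t : ℕ) :
    ∏ i ∈ range (2 * t), f i = ∏ j ∈ range t, (f (2 * j) * f (2 * j + 1)) := by
  induction t with
  | zero => simp
  | succ t ih => rw [Nat.mul_succ, prod_range_succ, prod_range_succ, ih, prod_range_succ, mul_assoc]

lemma Nat.mod_four_eq_three_of_dvd {q d : ℕ} (h1 : d ∣ 2 * (q - 1)) (h2 : d ∣ q + 1)
    (h3 : ¬ d ∣ q - 1) : q % 4 = 3 := by
  rcases Nat.eq_zero_or_pos q with rfl | hq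
  · exact absurd (dvd_zero d) h3
  have h4 : d ∣ 4 := by
    have := Nat.dvd_sub (h2.mul_left 2) h1
    rwa [show 2 * (q + 1) - 2 * (q - 1) = 4 by omega] at this
  have : d ≤ 4 := Nat.le_of_dvd four_pos h4
  interval_cases d <;> omega

section Domain

variable {R : Type*} [CommRing R] [IsDomain R]

lemma minimalPeriod_pow_eq_orderOf {m : ℕ} {x c : R} (hx0 : x ≠ 0) (hc : c ^ m = c)
    (hx : x ^ m = c * x) : minimalPeriod (· ^ m) x = orderOf c := by
  rw [orderOf, minimalPeriod_eq_minimalPeriod_iff]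
  intro j
  rw [isPeriodicPt_pow_iff, isPeriodicPt_mul_iff_pow_eq_one,
    pow_pow_eq_pow_mul_of_pow_eq_mul hc hx, mul_eq_right₀ hx0]

lemma IsPrimitiveRoot.eq_one_of_pow_eq_mul {k q : ℕ} [NeZero k] {c γ : R}
    (hc : IsPrimitiveRoot c k) (hcq : c ^ q = c) (hγ : γ ^ k = 1) (hγq : γ ^ q = c * γ) :
    c = 1 := by
  obtain ⟨i, -, rfl⟩ := hc.eq_pow_of_pow_eq_one hγ
  rwa [← pow_mul, mul_comm, pow_mul, hcq, eq_comm,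
    mul_eq_right₀ (pow_ne_zero _ (hc.ne_zero (NeZero.ne k)))] at hγq

lemma ne_zero_of_prod_range_pow_eq_one {q n : ℕ} {α : R} (hn : 0 < n)
    (hnorm : ∏ i ∈ range n, α ^ q ^ i = 1) : α ≠ 0 := by
  rintro rfl
  rw [prod_eq_zero (mem_range.mpr hn) (by simp)] at hnorm
  exact zero_ne_one hnorm

lemma minimalPeriod_pow_le_two_of_even {q t : ℕ} {α c : R} (hc : c ^ q = c)
    (hα : α ^ q ^ 2 = c * α) (ht : minimalPeriod (· ^ q) α = 2 * t)
    (hnorm : ∏ i ∈ range (2 * t), α ^ q ^ i = 1) : minimalPeriod (· ^ q) α ≤ 2 := by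
  rcases Nat.eq_zero_or_pos t with rfl | htpos
  · omega
  have : NeZero t := ⟨htpos.ne'⟩
  have hα0 := ne_zero_of_prod_range_pow_eq_one (by omega) hnorm
  have horder : orderOf c = t := by
    rw [← minimalPeriod_pow_eq_orderOf hα0 (by rw [sq, pow_mul, hc, hc]) hα, ← pow_iterate,
      minimalPeriod_iterate_eq_div_gcd two_ne_zero, ht, Nat.gcd_eq_right (dvd_mul_right 2 t)]
    omega
  have hprim : IsPrimitiveRoot c t := horder ▸ IsPrimitiveRoot.orderOf c
  have hβ : (α ^ (q + 1)) ^ q = c * α ^ (q + 1) := by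
    rw [← pow_mul, add_one_mul, pow_add, ← sq, hα, pow_succ']
    ring
  have hβt : (α ^ (q + 1)) ^ t = 1 := by
    have hsum : ∑ j ∈ range t, 2 * j = t * (t - 1) := by
      rw [← mul_sum, mul_comm, sum_range_id_mul_two]
    have hterm : ∀ j, α ^ q ^ (2 * j) * α ^ q ^ (2 * j + 1) = c ^ (2 * j) * α ^ (q + 1) := by
      intro j
      rw [← pow_pow_eq_pow_mul_of_pow_eq_mul hc hβ, ← pow_mul, pow_succ', add_one_mul, pow_add,
        mul_comm]
    rwa [prod_range_two_mul, prod_congr rfl fun j _ => hterm j, prod_mul_distrib,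
      prod_pow_eq_pow_sum, hsum, pow_mul, hprim.pow_eq_one, one_pow, one_mul, prod_const,
      card_range] at hnorm
  rw [ht, ← horder, hprim.eq_one_of_pow_eq_mul hc hβt hβ, orderOf_one]

end Domain

section Field

variable {L : Type*} [Field L]

lemma minimalPeriod_pow_eq_one_of_odd {q t : ℕ} {α c : L} (hc : c ^ q = c)
    (hα : α ^ q ^ 2 = c * α) (ht : minimalPeriod (· ^ q) α = 2 * t + 1)
    (hnorm : ∏ i ∈ range (2 * t + 1), α ^ q ^ i = 1) : minimalPeriod (· ^ q) α = 1 := by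
  have hα0 := ne_zero_of_prod_range_pow_eq_one (by omega) hnorm
  have hper : c ^ t * α ^ q = α := by
    have := isPeriodicPt_minimalPeriod (· ^ q) α
    rwa [ht, isPeriodicPt_pow_iff, pow_succ, pow_mul, pow_mul,
      pow_pow_eq_pow_mul_of_pow_eq_mul (by rw [sq, pow_mul, hc, hc]) hα, mul_pow,
      pow_right_comm, hc] at this
  have hct : c ^ t ≠ 0 := by
    rintro h
    rw [h, zero_mul] at hper
    exact hα0 hper.symm
  set d := (c ^ t)⁻¹
  have hd : d ^ q = d := by rw [inv_pow, pow_right_comm, hc]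
  have hαd : α ^ q = d * α := (eq_inv_mul_iff_mul_eq₀ hct).mpr hper
  have horder : orderOf d = 2 * t + 1 := by
    rw [← minimalPeriod_pow_eq_orderOf hα0 hd hαd, ht]
  have hprim : IsPrimitiveRoot d (2 * t + 1) := horder ▸ IsPrimitiveRoot.orderOf d
  have hαn : α ^ (2 * t + 1) = 1 := by
    have hsum : ∑ i ∈ range (2 * t + 1), i = (2 * t + 1) * t := by
      have := sum_range_id_mul_two (2 * t + 1)
      rw [Nat.add_sub_cancel] at this
      linarith
    rwa [prod_congr rfl fun i _ => pow_pow_eq_pow_mul_of_pow_eq_mul hd hαd i, prod_mul_distrib,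
      prod_pow_eq_pow_sum, hsum, pow_mul, hprim.pow_eq_one, one_pow, one_mul, prod_const,
      card_range] at hnorm
  rw [ht, ← horder, hprim.eq_one_of_pow_eq_mul hd hαn hαd, orderOf_one]

theorem minimalPeriod_pow_le_two {q : ℕ} {α c : L} (hc : c ^ q = c) (hα : α ^ q ^ 2 = c * α)
    (hnorm : ∏ i ∈ range (minimalPeriod (· ^ q) α), α ^ q ^ i = 1) :
    minimalPeriod (· ^ q) α ≤ 2 := by
  obtain ⟨t, ht | ht⟩ := Nat.even_or_odd' (minimalPeriod (· ^ q) α)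
  · exact minimalPeriod_pow_le_two_of_even hc hα ht (ht ▸ hnorm)
  · exact (minimalPeriod_pow_eq_one_of_odd hc hα ht (ht ▸ hnorm)).trans_le one_le_two

end Field

lemma mod_four_eq_three_of_minimalPeriod_eq_two {M : Type*} [CommMonoid M] {q : ℕ} {α : M}
    (hq : 0 < q) (hα : minimalPeriod (· ^ q) α = 2) (hnorm : ∏ i ∈ range 2, α ^ q ^ i = 1)
    (hsq : (α ^ (q - 1)) ^ 2 = 1) : q % 4 = 3 := by
  rw [prod_range_succ, prod_range_one, pow_zero, pow_one, pow_one, ← pow_succ'] at hnorm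
  refine Nat.mod_four_eq_three_of_dvd (d := orderOf α) (orderOf_dvd_of_pow_eq_one ?_)
    (orderOf_dvd_of_pow_eq_one hnorm) fun h => ?_
  · rwa [mul_comm, pow_mul]
  have hfix : IsPeriodicPt (· ^ q) 1 α := by
    rw [isPeriodicPt_pow_iff, pow_one, ← Nat.sub_add_cancel hq, pow_succ,
      orderOf_dvd_iff_pow_eq_one.mp h, one_mul]
  have := hfix.minimalPeriod_le one_pos
  omega

theorem Module.End.exists_linearEquiv_quotient_maximal {K V : Type*} [CommRing K]
    [AddCommGroup V] [Module K V] [Nontrivial V] (f : Module.End K V)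
    (hf : ∀ p : Submodule K V, (∀ v ∈ p, f v ∈ p) → p = ⊥ ∨ p = ⊤) :
    ∃ (I : Ideal K[X]) (_ : I.IsMaximal) (e : V ≃ₗ[K] K[X] ⧸ I),
      ∀ v, e (f v) = Ideal.Quotient.mk I X * e v := by
  have : IsSimpleModule K[X] (AEval' f) := by
    refine { toNontrivial := ?_, eq_bot_or_eq_top := fun N => ?_ }
    · exact (Submodule.nontrivial_iff _).mpr (AEval'.of f).symm.nontrivial
    let p := (N.restrictScalars K).comap (AEval'.of f : V →ₗ[K] AEval' f)
    have hp : ∀ v ∈ p, f v ∈ p := fun v hv => by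
      have := N.smul_mem X (show AEval'.of f v ∈ N from hv)
      rwa [AEval'.X_smul_of] at this
    refine (hf p hp).imp (fun h => ?_) (fun h => ?_)
    · refine (Submodule.eq_bot_iff N).mpr fun m hm => ?_
      have : (AEval'.of f).symm m ∈ p := by simpa [p] using hm
      simpa [h] using this
    · refine Submodule.eq_top_iff'.mpr fun m => ?_
      have : (AEval'.of f).symm m ∈ p := h ▸ Submodule.mem_top
      simpa [p] using this
  obtain ⟨I, hI, ⟨e⟩⟩ := isSimpleModule_iff_quot_maximal.mp this
  refine ⟨I, hI, (AEval'.of f).trans (e.restrictScalars K), fun v => ?_⟩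
  simp only [LinearEquiv.trans_apply, LinearEquiv.restrictScalars_apply, ← AEval'.X_smul_of,
    map_smul]
  rfl

section QuotientModel

variable {K V : Type*} [CommRing K] [AddCommGroup V] [Module K V] {f : Module.End K V}
  {I : Ideal K[X]} {e : V ≃ₗ[K] K[X] ⧸ I}

lemma apply_pow_eq_mk_X_pow_mul (he : ∀ v, e (f v) = Ideal.Quotient.mk I X * e v) (k : ℕ)
    (v : V) : e ((f ^ k) v) = Ideal.Quotient.mk I X ^ k * e v := by
  induction k with
  | zero => simp
  | succ k ih => rw [pow_succ', Module.End.mul_apply, he, ih, pow_succ', mul_assoc]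

lemma mk_X_pow_eq_algebraMap (he : ∀ v, e (f v) = Ideal.Quotient.mk I X * e v) {k : ℕ} {r : K}
    (hk : f ^ k = algebraMap K (Module.End K V) r) :
    Ideal.Quotient.mk I X ^ k = algebraMap K (K[X] ⧸ I) r := by
  have := apply_pow_eq_mk_X_pow_mul he k (e.symm 1)
  rwa [hk, Module.algebraMap_end_apply, map_smul, LinearEquiv.apply_symm_apply, mul_one,
    ← Algebra.algebraMap_eq_smul_one, eq_comm] at this

lemma det_eq_norm_mk_X (he : ∀ v, e (f v) = Ideal.Quotient.mk I X * e v) :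
    LinearMap.det f = Algebra.norm K (Ideal.Quotient.mk I X) := by
  rw [Algebra.norm_apply, ← LinearMap.det_conj f e]
  congr 1
  ext x
  simp [he]

end QuotientModel

lemma Ideal.Quotient.adjoin_mk_X_eq_top {K : Type*} [CommRing K] (I : Ideal K[X]) :
    Algebra.adjoin K {Ideal.Quotient.mk I X} = ⊤ := by
  rw [← Ideal.Quotient.mkₐ_eq_mk K, ← Set.image_singleton, ← AlgHom.map_adjoin,
    Polynomial.adjoin_X, Algebra.map_top, AlgHom.range_eq_top]
  exact Ideal.Quotient.mkₐ_surjective K I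

lemma FiniteField.minimalPeriod_pow_card_eq_finrank {K L : Type*} [Field K] [Fintype K]
    [Field L] [Finite L] [Algebra K L] {α : L} (hα : Algebra.adjoin K {α} = ⊤) :
    minimalPeriod (· ^ Fintype.card K) α = finrank K L := by
  rw [← FiniteField.orderOf_frobeniusAlgHom K L, orderOf, minimalPeriod_eq_minimalPeriod_iff]
  intro e
  have hσ : ∀ x : L, (frobeniusAlgHom K L ^ e) x = x ^ Fintype.card K ^ e := fun x => by
    rw [AlgHom.coe_pow, coe_frobeniusAlgHom, pow_iterate]
  rw [isPeriodicPt_mul_iff_pow_eq_one, isPeriodicPt_pow_iff]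
  constructor
  · intro h
    exact AlgHom.ext_of_adjoin_eq_top hα (by simp [Set.EqOn, hσ, h])
  · intro h
    simpa [hσ] using congr($h α)

lemma Matrix.SpecialLinearGroup.exists_toLin'_pow_eq_algebraMap {n F : Type*} [Fintype n]
    [DecidableEq n] [Field F] {A : Matrix.SpecialLinearGroup n F} {k : ℕ}
    (hk : A ^ k ∈ Subgroup.center (Matrix.SpecialLinearGroup n F)) :
    ∃ r : F, r ^ Fintype.card n = 1 ∧
      Matrix.toLin' (A : Matrix n n F) ^ k = algebraMap F (Module.End F (n → F)) r := by
  obtain ⟨r, hrn, hr⟩ := Matrix.SpecialLinearGroup.mem_center_iff.mp hk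
  refine ⟨r, hrn, ?_⟩
  have := (Matrix.toLinAlgEquiv' (R := F) (n := n)).commutes r
  rwa [Matrix.algebraMap_eq_diagonal, Pi.algebraMap_def, Algebra.algebraMap_self,
    RingHom.id_apply, ← Matrix.scalar_apply, hr, Matrix.SpecialLinearGroup.coe_pow,
    map_pow] at this

/-- Let `F` be a finite field with `q` elements and `A ∈ SL(n, F)` such that
`A^(q²-1)` is scalar and `⟨A⟩` acts irreducibly on `Fⁿ`.  Then `n ∈ {1, 2}`; and if
moreover `n = 2` and `A^(q-1)` is scalar, then `q ≡ 3 (mod 4)`. -/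
theorem irreducible_matrix_low_dimension (F : Type*) [Field F] [Fintype F]
    (q : ℕ) (hq : q = Fintype.card F) (n : ℕ) (hn : 0 < n)
    (A : Matrix.SpecialLinearGroup (Fin n) F)
    (hcen : A ^ (q ^ 2 - 1) ∈ Subgroup.center (Matrix.SpecialLinearGroup (Fin n) F))
    (hirr : ∀ W : Submodule F (Fin n → F),
      (∀ w ∈ W, (A : Matrix (Fin n) (Fin n) F).mulVec w ∈ W) → W = ⊥ ∨ W = ⊤) :
    (n = 1 ∨ n = 2) ∧
    (n = 2 → A ^ (q - 1) ∈ Subgroup.center (Matrix.SpecialLinearGroup (Fin n) F) →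
      q % 4 = 3) := by
  have : Nonempty (Fin n) := ⟨⟨0, hn⟩⟩
  obtain ⟨I, hI, e, he⟩ := Module.End.exists_linearEquiv_quotient_maximal
    (Matrix.toLin' (A : Matrix (Fin n) (Fin n) F)) (by simpa only [Matrix.toLin'_apply] using hirr)
  let _ : Field (F[X] ⧸ I) := Ideal.Quotient.field I
  have : Finite (F[X] ⧸ I) := Finite.of_equiv _ e.toEquiv
  have hrank : finrank F (F[X] ⧸ I) = n := by rw [← e.finrank_eq, finrank_fin_fun]
  set α := Ideal.Quotient.mk I X
  have hperiod : minimalPeriod (· ^ q) α = n := by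
    rw [hq, FiniteField.minimalPeriod_pow_card_eq_finrank (Ideal.Quotient.adjoin_mk_X_eq_top I),
      hrank]
  have hnorm : ∏ i ∈ range n, α ^ q ^ i = 1 := by
    have := FiniteField.algebraMap_norm_eq_prod_pow F (F[X] ⧸ I) α
    rwa [← det_eq_norm_mk_X he, LinearMap.det_toLin', A.2, map_one, hrank,
      Nat.card_eq_fintype_card, ← hq, eq_comm] at this
  have hscalar : ∀ k, A ^ k ∈ Subgroup.center (Matrix.SpecialLinearGroup (Fin n) F) →
      ∃ r : F, r ^ n = 1 ∧ α ^ k = algebraMap F _ r := fun k hk => by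
    obtain ⟨r, hrn, hr⟩ := Matrix.SpecialLinearGroup.exists_toLin'_pow_eq_algebraMap hk
    exact ⟨r, by rwa [Fintype.card_fin] at hrn, mk_X_pow_eq_algebraMap he hr⟩
  have hq0 : 0 < q := hq ▸ Fintype.card_pos
  refine ⟨?_, fun hn2 hcen' => ?_⟩
  · obtain ⟨r, -, hr⟩ := hscalar _ hcen
    have hα : α ^ q ^ 2 = algebraMap F _ r * α := by
      rw [← hr, ← pow_succ, Nat.sub_add_cancel (Nat.one_le_pow _ _ hq0)]
    have := minimalPeriod_pow_le_two (by rw [← map_pow, hq, FiniteField.pow_card]) hα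
      (hperiod ▸ hnorm)
    omega
  · subst hn2
    obtain ⟨r, hr2, hr⟩ := hscalar _ hcen'
    exact mod_four_eq_three_of_minimalPeriod_eq_two hq0 hperiod hnorm
      (by rw [hr, ← map_pow, hr2, map_one])
end

section
/- Let F be a finite field with q elements, let n ≥ 2, with q ≥ 4 if n = 2, let H = SL(n,F), and let X be a one-dimensional F-subspace of F^n. Let H_X denote the stabiliser of X in H, i.e., the subgroup of all A ∈ H with A·X = X. Then the centraliser of H_X in H equals the center Z(H) of H: every element of H commuting with all elements of H_X is a scalar matrix. -/
/-!
Let `v` span `X` and let `B` commute with the stabiliser of `X`. For `u ≠ 0` with `u ⬝ᵥ v = 0`,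
every matrix `s • (1 + r • w uᵀ)` fixes the line `X` and has determinant `sⁿ (1 + r (u ⬝ᵥ w))`.
When it lies in `SL(n, F)` with `s, r ≠ 0`, `B` commutes with the rank-one matrix `w uᵀ` and so
preserves its image `F w`. For `n ≥ 3` a transvection does this (`u ⊥ v, w`, `s = r = 1`); for
`n = 2` and `u ⬝ᵥ w ≠ 0` one needs `s ≠ 0` with `s² ≠ 1`, which exists once `q ≥ 4`.
Hence `B` maps every line to itself and is scalar.
-/

open Matrix Submodule

theorem exists_ne_zero_sq_ne_one {K : Type*} [Field K] [Fintype K] (h : 4 ≤ Fintype.card K) :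
    ∃ a : K, a ≠ 0 ∧ a ^ 2 ≠ 1 := by
  classical
  obtain ⟨a, -, ha⟩ := Finset.exists_mem_notMem_of_card_lt_card
    (s := {0, 1, -1}) (t := Finset.univ) (lt_of_lt_of_le (Nat.lt_succ_of_le Finset.card_le_three) h)
  simp only [Finset.mem_insert, Finset.mem_singleton, not_or] at ha
  exact ⟨a, ha.1, fun h2 => (sq_eq_one_iff.mp h2).elim ha.2.1 ha.2.2⟩

namespace Matrix

variable {ι K : Type*} [Fintype ι]

theorem det_one_add_vecMulVec [DecidableEq ι] {R : Type*} [CommRing R] (w u : ι → R) :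
    (1 + vecMulVec w u).det = 1 + u ⬝ᵥ w := by
  rw [vecMulVec_eq Unit, det_one_add_replicateCol_mul_replicateRow]

theorem exists_mulVec_eq_smul_of_commute_vecMulVec [DecidableEq ι] [Field K] {M : Matrix ι ι K}
    {w u : ι → K} (hu : u ≠ 0) (h : Commute M (vecMulVec w u)) : ∃ c : K, M *ᵥ w = c • w := by
  obtain ⟨j, hj⟩ := Function.ne_iff.mp hu
  set x : ι → K := Pi.single j (u j)⁻¹
  have hux : u ⬝ᵥ x = 1 := by simp [x, dotProduct_single, mul_inv_cancel₀ hj]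
  refine ⟨u ⬝ᵥ (M *ᵥ x), ?_⟩
  calc M *ᵥ w = M *ᵥ (vecMulVec w u *ᵥ x) := by rw [vecMulVec_mulVec, hux]; simp
    _ = vecMulVec w u *ᵥ (M *ᵥ x) := by rw [mulVec_mulVec, h.eq, ← mulVec_mulVec]
    _ = (u ⬝ᵥ (M *ᵥ x)) • w := by rw [vecMulVec_mulVec, op_smul_eq_smul]

theorem commute_of_commute_smul_one_add_smul [DecidableEq ι] [Field K] {M N : Matrix ι ι K}
    {s r : K} (hs : s ≠ 0) (hr : r ≠ 0) (h : Commute M (s • (1 + r • N))) : Commute M N := by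
  have h₁ : Commute M (1 + r • N) := (Commute.smul_right_iff₀ hs).mp h
  have h₂ : Commute M (r • N) := by simpa using h₁.sub_right (Commute.one_right M)
  exact (Commute.smul_right_iff₀ hr).mp h₂

theorem exists_ne_zero_forall_dotProduct_eq_zero [Field K] {k : ℕ} (vs : Fin k → ι → K)
    (hk : k < Fintype.card ι) : ∃ u : ι → K, u ≠ 0 ∧ ∀ i, u ⬝ᵥ vs i = 0 := by
  have hker : LinearMap.ker (Matrix.of vs).mulVecLin ≠ ⊥ :=
    LinearMap.ker_ne_bot_of_finrank_lt (by simpa using hk)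
  obtain ⟨u, hu, hu0⟩ := exists_mem_ne_zero_of_ne_bot hker
  refine ⟨u, hu0, fun i => ?_⟩
  rw [dotProduct_comm]
  exact congrFun (LinearMap.mem_ker.mp hu) i

theorem exists_det_smul_one_add_smul_vecMulVec_eq_one [DecidableEq ι] [Field K] [Fintype K]
    (hn : 2 ≤ Fintype.card ι) (hq : Fintype.card ι = 2 → 4 ≤ Fintype.card K) (v w : ι → K) :
    ∃ u : ι → K, u ≠ 0 ∧ u ⬝ᵥ v = 0 ∧
      ∃ s r : K, s ≠ 0 ∧ r ≠ 0 ∧ (s • (1 + r • vecMulVec w u)).det = 1 := by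
  simp_rw [det_smul, ← smul_vecMulVec, det_one_add_vecMulVec, dotProduct_smul, smul_eq_mul]
  by_cases hperp : ∃ u : ι → K, u ≠ 0 ∧ u ⬝ᵥ v = 0 ∧ u ⬝ᵥ w = 0
  · obtain ⟨u, hu, huv, huw⟩ := hperp
    exact ⟨u, hu, huv, 1, 1, one_ne_zero, one_ne_zero, by simp [huw]⟩
  have hn2 : Fintype.card ι = 2 := by
    by_contra hn2
    obtain ⟨u, hu, hu'⟩ := exists_ne_zero_forall_dotProduct_eq_zero ![v, w] (by omega)
    exact hperp ⟨u, hu, hu' 0, hu' 1⟩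
  obtain ⟨u, hu, hu'⟩ := exists_ne_zero_forall_dotProduct_eq_zero ![v] (by omega)
  have huw : u ⬝ᵥ w ≠ 0 := fun huw => hperp ⟨u, hu, hu' 0, huw⟩
  obtain ⟨a, ha0, ha⟩ := exists_ne_zero_sq_ne_one (hq hn2)
  have ha' : a⁻¹ ^ 2 - 1 ≠ 0 := by
    rw [sub_ne_zero, inv_pow, inv_ne_one]
    exact ha
  refine ⟨u, hu, hu' 0, a, (a⁻¹ ^ 2 - 1) / (u ⬝ᵥ w), ha0, div_ne_zero ha' huw, ?_⟩
  rw [hn2]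
  field_simp
  ring

theorem exists_mulVec_eq_smul_of_forall_commute_of_map_span_singleton_eq [DecidableEq ι] [Field K]
    {B : SpecialLinearGroup ι K} {v w u : ι → K}
    (h : ∀ A : SpecialLinearGroup ι K,
      (K ∙ v).map (mulVecLin (A : Matrix ι ι K)) = K ∙ v → B * A = A * B)
    (hu : u ≠ 0) (huv : u ⬝ᵥ v = 0) {s r : K} (hs : s ≠ 0) (hr : r ≠ 0)
    (hdet : (s • (1 + r • vecMulVec w u)).det = 1) :
    ∃ c : K, (B : Matrix ι ι K) *ᵥ w = c • w := by
  set A : Matrix ι ι K := s • (1 + r • vecMulVec w u)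
  have hAv : A *ᵥ v = s • v := by
    simp [A, smul_mulVec, add_mulVec, vecMulVec_mulVec, huv]
  have hstab : (K ∙ v).map (mulVecLin A) = K ∙ v := by
    rw [map_span, Set.image_singleton, mulVecLin_apply, hAv, span_singleton_smul_eq hs.isUnit]
  have hcomm : Commute (B : Matrix ι ι K) A := congrArg Subtype.val (h ⟨A, hdet⟩ hstab)
  exact exists_mulVec_eq_smul_of_commute_vecMulVec hu
    (commute_of_commute_smul_one_add_smul hs hr hcomm)

namespace SpecialLinearGroup

theorem mem_center_of_forall_exists_mulVec_eq_smul [DecidableEq ι] [Field K]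
    {B : SpecialLinearGroup ι K} (h : ∀ w, ∃ c : K, (B : Matrix ι ι K) *ᵥ w = c • w) :
    B ∈ Subgroup.center (SpecialLinearGroup ι K) := by
  obtain ⟨a, ha⟩ := (mulVecLin (B : Matrix ι ι K)).exists_eq_smul_id_of_forall_notLinearIndependent
    fun w hli => by
      obtain ⟨c, hc⟩ := h w
      have := LinearIndependent.pair_iff.mp hli c (-1) (by simp [hc])
      exact one_ne_zero (neg_eq_zero.mp this.2)
  have hB : (B : Matrix ι ι K) = a • 1 := by
    apply Matrix.toLin'.injective
    rw [toLin'_apply', ha, map_smul, toLin'_one]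
    rfl
  refine Subgroup.mem_center_iff.mpr fun A => Subtype.ext ?_
  simp [hB]

end SpecialLinearGroup

end Matrix

/-- Let `F` be a finite field with `q` elements, `n ≥ 2` with `q ≥ 4` if `n = 2`,
`H = SL(n, F)`, and `X` a one-dimensional subspace of `Fⁿ`.  Then the centraliser in
`H` of the setwise stabiliser `H_X` of `X` is exactly the centre of `H`. -/
theorem centralizer_of_line_stabilizer_eq_center (F : Type*) [Field F] [Fintype F]
    (n : ℕ) (hn : 2 ≤ n) (hq : n = 2 → 4 ≤ Fintype.card F)
    (X : Submodule F (Fin n → F)) (hX : Module.finrank F X = 1)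
    (B : Matrix.SpecialLinearGroup (Fin n) F) :
    (∀ A : Matrix.SpecialLinearGroup (Fin n) F,
        X.map (Matrix.mulVecLin (A : Matrix (Fin n) (Fin n) F)) = X → B * A = A * B) ↔
      B ∈ Subgroup.center (Matrix.SpecialLinearGroup (Fin n) F) := by
  refine ⟨fun h => ?_, fun hB A _ => (Subgroup.mem_center_iff.mp hB A).symm⟩
  obtain ⟨v, hvX, hv0⟩ := exists_mem_ne_zero_of_ne_bot (p := X) (by rintro rfl; simp at hX)
  rw [eq_span_singleton_of_mem_of_finrank_eq_one hX hvX hv0] at h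
  refine SpecialLinearGroup.mem_center_of_forall_exists_mulVec_eq_smul fun w => ?_
  obtain ⟨u, hu, huv, s, r, hs, hr, hdet⟩ :=
    exists_det_smul_one_add_smul_vecMulVec_eq_one (by simpa using hn) (by simpa using hq) v w
  exact exists_mulVec_eq_smul_of_forall_commute_of_map_span_singleton_eq h hu huv hs hr hdet
end
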